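/- arXiv:1306.0529 — 12 statements merged into one kernel-verified Lean document; each statement's English description precedes it below -/
import Mathlib

section
/- Let n ≥ 2 and let π⁺, π⁻ be subsets of the simple roots π of sl_n with π⁺ ∪ π⁻ = π. Then R_* ∩ (−R_*) = ∅, and Δ is the disjoint union of M and K ∪ (−K). (Lemma 1.8 (iii),(iv).) -/
open Pointwise

noncomputable def eps (n : ℕ) (i : Fin n) : Fin n → ℝ := Pi.single i 1

/-- The roots of `sl_n`: `ε_i - ε_j` for `i ≠ j`. -/
def Delta (n : ℕ) : Set (Fin n → ℝ) :=
  {v | ∃ i j : Fin n, i ≠ j ∧ v = eps n i - eps n j}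

/-- The positive roots: `ε_i - ε_j` for `i < j`. -/
def DeltaPos (n : ℕ) : Set (Fin n → ℝ) :=
  {v | ∃ i j : Fin n, i < j ∧ v = eps n i - eps n j}

/-- The negative roots. -/
def DeltaNeg (n : ℕ) : Set (Fin n → ℝ) := -DeltaPos n

/-- The simple roots `α_i = ε_i - ε_{i+1}`. -/
def simpleRoots (n : ℕ) : Set (Fin n → ℝ) :=
  {v | ∃ i j : Fin n, (j : ℕ) = (i : ℕ) + 1 ∧ v = eps n i - eps n j}

/-- The set of ℕ-linear combinations of elements of `S`. -/
def Nspan {n : ℕ} (S : Set (Fin n → ℝ)) : Set (Fin n → ℝ) :=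
  (AddSubmonoid.closure S : AddSubmonoid (Fin n → ℝ))

/-- `R = (ℕπ⁺ ∪ (−ℕπ⁻)) ∩ Δ`. -/
def Rset (n : ℕ) (Pp Pm : Set (Fin n → ℝ)) : Set (Fin n → ℝ) :=
  (Nspan Pp ∪ -Nspan Pm) ∩ Delta n

/-- `K = Δ \ R`. -/
def Kset (n : ℕ) (Pp Pm : Set (Fin n → ℝ)) : Set (Fin n → ℝ) :=
  Delta n \ Rset n Pp Pm

/-- `M = R ∩ (−R)`. -/
def Mset (n : ℕ) (Pp Pm : Set (Fin n → ℝ)) : Set (Fin n → ℝ) :=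
  Rset n Pp Pm ∩ -Rset n Pp Pm

/-- `R_* = (−R) \ M`. -/
def RstarSet (n : ℕ) (Pp Pm : Set (Fin n → ℝ)) : Set (Fin n → ℝ) :=
  -Rset n Pp Pm \ Mset n Pp Pm

/-- Lemma 1.8 (iii),(iv): `R_* ∩ (−R_*) = ∅`, and `Δ` is the disjoint union of `M` and
`K ∪ (−K)`. -/
theorem statement_1 (n : ℕ) (hn : 2 ≤ n) (Pp Pm : Set (Fin n → ℝ))
    (hPp : Pp ⊆ simpleRoots n) (hPm : Pm ⊆ simpleRoots n)
    (hU : Pp ∪ Pm = simpleRoots n) :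
    RstarSet n Pp Pm ∩ (-RstarSet n Pp Pm) = ∅ ∧
    Delta n = Mset n Pp Pm ∪ (Kset n Pp Pm ∪ -Kset n Pp Pm) ∧
    Disjoint (Mset n Pp Pm) (Kset n Pp Pm ∪ -Kset n Pp Pm) := by
  have hsym : ∀ v ∈ Delta n, -v ∈ Delta n := by
    rintro v ⟨i, j, hij, rfl⟩
    exact ⟨j, i, hij.symm, by abel⟩
  set R := Rset n Pp Pm with hRdef
  have hRD : R ⊆ Delta n := fun v hv => hv.2
  refine ⟨?_, ?_, ?_⟩
  · ext v
    simp only [Set.mem_empty_iff_false, iff_false]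
    rintro ⟨⟨h1, h2⟩, h3⟩
    rw [Set.mem_neg] at h3
    obtain ⟨h4, -⟩ := h3
    rw [Set.mem_neg, neg_neg] at h4
    exact h2 ⟨h4, h1⟩
  · ext v
    constructor
    · intro hv
      by_cases hR : v ∈ R
      · by_cases hR' : v ∈ -R
        · exact Or.inl ⟨hR, hR'⟩
        · refine Or.inr (Or.inr ?_)
          rw [Set.mem_neg]
          exact ⟨hsym v hv, fun h => hR' (Set.mem_neg.mpr h)⟩
      · exact Or.inr (Or.inl ⟨hv, hR⟩)
    · rintro (⟨h, -⟩ | (⟨h, -⟩ | h))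
      · exact hRD h
      · exact h
      · rw [Set.mem_neg] at h
        have := hsym _ h.1
        rwa [neg_neg] at this
  · rw [Set.disjoint_left]
    rintro v ⟨h1, h2⟩ (h3 | h3)
    · exact h3.2 h1
    · rw [Set.mem_neg] at h3
      rw [Set.mem_neg] at h2
      exact h3.2 h2
end

section
/- Let n ≥ 2 and let π⁺, π⁻ be subsets of the simple roots π of sl_n with π⁺ ∪ π⁻ = π. If μ ∈ M, γ ∈ K and μ + γ ∈ Δ, then μ + γ ∈ K; if μ ∈ M, γ ∈ −K and μ + γ ∈ Δ, then μ + γ ∈ −K. (Lemma 1.8 (vii),(viii).) -/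
/-! A root `ε_i - ε_j` lies in `ℕS` for a set `S` of simple roots exactly when `i ≤ j` and every
`α_k` with `i ≤ k < j` lies in `S`: the partial-sum functionals `v ↦ ∑_{t ≤ m} v t` are nonnegative
on `ℕπ`, and vanish on `ℕS` when `α_m ∉ S`. Two roots add up to a root only when they share an
endpoint, and then these intervals of simple roots combine, so `R` is closed under addition inside
`Δ`. Hence for `μ ∈ M = R ∩ -R` and `γ ∈ K`, `μ + γ ∈ R` would give `γ = -μ + (μ + γ) ∈ R`; the
statement for `-K` is the one for `K` applied to `-μ` and `-γ`. -/

open Pointwise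

lemma eps_apply {n : ℕ} (i t : Fin n) : eps n i t = if t = i then 1 else 0 := by
  simp [eps, Pi.single_apply]

section SimpleChains

variable {n : ℕ}

def partialSum (m : Fin n) : (Fin n → ℝ) →+ ℝ where
  toFun v := ∑ t ∈ Finset.Iic m, v t
  map_zero' := by simp
  map_add' x y := by simp [Finset.sum_add_distrib]

lemma partialSum_eps (m a : Fin n) : partialSum m (eps n a) = if a ≤ m then 1 else 0 := by
  simp [partialSum, eps_apply]

lemma partialSum_eps_sub_eps (m a b : Fin n) :
    partialSum m (eps n a - eps n b) = (if a ≤ m then 1 else 0) - (if b ≤ m then 1 else 0) := by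
  rw [map_sub, partialSum_eps, partialSum_eps]

lemma partialSum_simpleRoot (m : Fin n) {a b : Fin n} (hab : (b : ℕ) = a + 1) :
    partialSum m (eps n a - eps n b) = if a = m then 1 else 0 := by
  rw [partialSum_eps_sub_eps]
  split_ifs <;> simp only [Fin.le_def, Fin.ext_iff] at * <;> first | omega | norm_num

variable {S : Set (Fin n → ℝ)}

lemma partialSum_nonneg_of_mem_nspan (hS : S ⊆ simpleRoots n) (m : Fin n)
    {v : Fin n → ℝ} (hv : v ∈ Nspan S) : 0 ≤ partialSum m v := by
  change v ∈ AddSubmonoid.closure S at hv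
  induction hv using AddSubmonoid.closure_induction with
  | mem x hx =>
    obtain ⟨a, b, hab, rfl⟩ := hS hx
    rw [partialSum_simpleRoot m hab]
    split_ifs <;> norm_num
  | zero => simp
  | add x y _ _ hx hy => rw [map_add]; exact add_nonneg hx hy

lemma partialSum_eq_zero_of_mem_nspan (hS : S ⊆ simpleRoots n) {m : Fin n}
    (hm : ∀ l : Fin n, (l : ℕ) = m + 1 → eps n m - eps n l ∉ S)
    {v : Fin n → ℝ} (hv : v ∈ Nspan S) : partialSum m v = 0 := by
  change v ∈ AddSubmonoid.closure S at hv
  induction hv using AddSubmonoid.closure_induction with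
  | mem x hx =>
    obtain ⟨a, b, hab, rfl⟩ := hS hx
    rw [partialSum_simpleRoot m hab, if_neg]
    rintro rfl
    exact hm b hab hx
  | zero => simp
  | add x y _ _ hx hy => rw [map_add, hx, hy, add_zero]

def SimpleChain (S : Set (Fin n → ℝ)) (i j : Fin n) : Prop :=
  i ≤ j ∧ ∀ k l : Fin n, i ≤ k → l ≤ j → (l : ℕ) = k + 1 → eps n k - eps n l ∈ S

lemma SimpleChain.mono {i j i' j' : Fin n} (h : SimpleChain S i j)
    (hi : i ≤ i') (hij' : i' ≤ j') (hj : j' ≤ j) : SimpleChain S i' j' :=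
  ⟨hij', fun k l hk hl hkl => h.2 k l (hi.trans hk) (hl.trans hj) hkl⟩

lemma SimpleChain.trans {i j k : Fin n} (h₁ : SimpleChain S i j) (h₂ : SimpleChain S j k) :
    SimpleChain S i k := by
  refine ⟨h₁.1.trans h₂.1, fun a b hia hbk hab => ?_⟩
  rcases le_or_gt b j with hbj | hjb
  · exact h₁.2 a b hia hbj hab
  · exact h₂.2 a b (by omega) hbk hab

lemma simpleChain_of_mem_nspan (hS : S ⊆ simpleRoots n) {i j : Fin n}
    (h : eps n i - eps n j ∈ Nspan S) : SimpleChain S i j := by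
  have hij : i ≤ j := by
    have := partialSum_nonneg_of_mem_nspan hS j h
    rw [partialSum_eps_sub_eps, if_pos le_rfl] at this
    by_contra hji
    rw [if_neg hji] at this
    norm_num at this
  refine ⟨hij, fun k l hik hlj hkl => ?_⟩
  by_contra hkS
  have hk := partialSum_eq_zero_of_mem_nspan hS
    (fun l' hl' => (Fin.ext (hl'.trans hkl.symm) : l' = l) ▸ hkS) h
  have hkj : ¬ j ≤ k := by omega
  rw [partialSum_eps_sub_eps, if_pos hik, if_neg hkj] at hk
  norm_num at hk

lemma mem_nspan_of_simpleChain {i j : Fin n} (h : SimpleChain S i j) :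
    eps n i - eps n j ∈ Nspan S := by
  obtain ⟨d, hd⟩ := Nat.exists_eq_add_of_le (Fin.le_def.mp h.1)
  induction d generalizing j with
  | zero => rw [Fin.ext hd, sub_self]; exact zero_mem _
  | succ d ih =>
    set j' : Fin n := ⟨i + d, by omega⟩
    have hij' : i ≤ j' := Fin.le_def.mpr (show (i : ℕ) ≤ i + d by omega)
    have hj'j : j' ≤ j := Fin.le_def.mpr (show (i : ℕ) + d ≤ j by omega)
    rw [← sub_add_sub_cancel _ (eps n j')]
    exact add_mem (ih (h.mono le_rfl hij' hj'j) rfl)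
      (AddSubmonoid.subset_closure (h.2 j' j hij' le_rfl (show (j : ℕ) = i + d + 1 by omega)))

lemma eps_sub_eps_mem_nspan_iff (hS : S ⊆ simpleRoots n) {i j : Fin n} :
    eps n i - eps n j ∈ Nspan S ↔ SimpleChain S i j :=
  ⟨simpleChain_of_mem_nspan hS, mem_nspan_of_simpleChain⟩

end SimpleChains

section RootSums

variable {n : ℕ}

lemma eq_of_pos_eps_sub_eps_apply {p q t : Fin n} (h : 0 < (eps n p - eps n q) t) : t = p := by
  by_contra htp
  simp only [Pi.sub_apply, eps_apply, if_neg htp] at h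
  split_ifs at h <;> norm_num at h

lemma eq_of_eps_sub_eps_apply_neg {p q t : Fin n} (h : (eps n p - eps n q) t < 0) : t = q := by
  by_contra htq
  simp only [Pi.sub_apply, eps_apply, if_neg htq] at h
  split_ifs at h <;> norm_num at h

lemma eq_or_eq_of_add_mem_Delta {i j k l : Fin n} (hij : i ≠ j) (hkl : k ≠ l)
    (h : eps n i - eps n j + (eps n k - eps n l) ∈ Delta n) : j = k ∨ i = l := by
  by_contra! hne
  obtain ⟨p, q, -, heq⟩ := h
  have hip : i = p := by
    refine eq_of_pos_eps_sub_eps_apply (q := q) ?_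
    rw [← heq]
    simp only [Pi.add_apply, Pi.sub_apply, eps_apply, if_neg hij, if_neg hne.2]
    split_ifs <;> norm_num
  have hjq : j = q := by
    refine eq_of_eps_sub_eps_apply_neg (p := p) ?_
    rw [← heq]
    simp only [Pi.add_apply, Pi.sub_apply, eps_apply, if_neg hij.symm, if_neg hne.1]
    split_ifs <;> norm_num
  subst hip hjq
  have hkk := congrFun (sub_eq_zero.mp (add_eq_left.mp heq)) k
  simp [eps_apply, hkl] at hkk

end RootSums

section Closedness

variable {n : ℕ} {Pp Pm : Set (Fin n → ℝ)}

lemma neg_mem_Delta {x : Fin n → ℝ} (hx : x ∈ Delta n) : -x ∈ Delta n := by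
  obtain ⟨i, j, hij, rfl⟩ := hx
  exact ⟨j, i, hij.symm, neg_sub _ _⟩

lemma neg_mem_Mset {μ : Fin n → ℝ} (hμ : μ ∈ Mset n Pp Pm) : -μ ∈ Mset n Pp Pm :=
  ⟨hμ.2, Set.neg_mem_neg.mpr hμ.1⟩

lemma eps_sub_eps_mem_nspan_union_neg_iff (hPp : Pp ⊆ simpleRoots n)
    (hPm : Pm ⊆ simpleRoots n) {i j : Fin n} :
    eps n i - eps n j ∈ Nspan Pp ∪ -Nspan Pm ↔ SimpleChain Pp i j ∨ SimpleChain Pm j i := by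
  rw [Set.mem_union, Set.mem_neg, neg_sub, eps_sub_eps_mem_nspan_iff hPp,
    eps_sub_eps_mem_nspan_iff hPm]

lemma simpleChain_or_simpleChain_trans {i j k : Fin n}
    (h₁ : SimpleChain Pp i j ∨ SimpleChain Pm j i) (h₂ : SimpleChain Pp j k ∨ SimpleChain Pm k j) :
    SimpleChain Pp i k ∨ SimpleChain Pm k i := by
  rcases h₁ with h₁ | h₁ <;> rcases h₂ with h₂ | h₂
  · exact .inl (h₁.trans h₂)
  · rcases le_total i k with hik | hki
    · exact .inl (h₁.mono le_rfl hik h₂.1)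
    · exact .inr (h₂.mono le_rfl hki h₁.1)
  · rcases le_total i k with hik | hki
    · exact .inl (h₂.mono h₁.1 hik le_rfl)
    · exact .inr (h₁.mono h₂.1 hki le_rfl)
  · exact .inr (h₂.trans h₁)

lemma add_mem_Rset (hPp : Pp ⊆ simpleRoots n) (hPm : Pm ⊆ simpleRoots n)
    {x y : Fin n → ℝ} (hx : x ∈ Rset n Pp Pm) (hy : y ∈ Rset n Pp Pm) (hxy : x + y ∈ Delta n) :
    x + y ∈ Rset n Pp Pm := by
  refine ⟨?_, hxy⟩
  obtain ⟨i, j, hij, rfl⟩ := hx.2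
  obtain ⟨k, l, hkl, rfl⟩ := hy.2
  have hx' := (eps_sub_eps_mem_nspan_union_neg_iff hPp hPm).mp hx.1
  have hy' := (eps_sub_eps_mem_nspan_union_neg_iff hPp hPm).mp hy.1
  rcases eq_or_eq_of_add_mem_Delta hij hkl hxy with rfl | rfl
  · rw [sub_add_sub_cancel, eps_sub_eps_mem_nspan_union_neg_iff hPp hPm]
    exact simpleChain_or_simpleChain_trans hx' hy'
  · rw [add_comm, sub_add_sub_cancel, eps_sub_eps_mem_nspan_union_neg_iff hPp hPm]
    exact simpleChain_or_simpleChain_trans hy' hx'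

lemma add_mem_Kset_of_mem_Mset (hPp : Pp ⊆ simpleRoots n) (hPm : Pm ⊆ simpleRoots n)
    {μ γ : Fin n → ℝ} (hμ : μ ∈ Mset n Pp Pm) (hγ : γ ∈ Kset n Pp Pm) (h : μ + γ ∈ Delta n) :
    μ + γ ∈ Kset n Pp Pm := by
  refine ⟨h, fun hR => hγ.2 ?_⟩
  have hγΔ : -μ + (μ + γ) ∈ Delta n := by rw [neg_add_cancel_left]; exact hγ.1
  simpa only [neg_add_cancel_left] using add_mem_Rset hPp hPm hμ.2 hR hγΔ

end Closedness

theorem statement_3_general (n : ℕ) (Pp Pm : Set (Fin n → ℝ))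
    (hPp : Pp ⊆ simpleRoots n) (hPm : Pm ⊆ simpleRoots n) :
    (∀ μ ∈ Mset n Pp Pm, ∀ γ ∈ Kset n Pp Pm,
      μ + γ ∈ Delta n → μ + γ ∈ Kset n Pp Pm) ∧
    (∀ μ ∈ Mset n Pp Pm, ∀ γ ∈ -Kset n Pp Pm,
      μ + γ ∈ Delta n → μ + γ ∈ -Kset n Pp Pm) := by
  refine ⟨fun μ hμ γ hγ h => add_mem_Kset_of_mem_Mset hPp hPm hμ hγ h, fun μ hμ γ hγ h => ?_⟩
  have hneg : -μ + -γ ∈ Delta n := by rw [← neg_add]; exact neg_mem_Delta h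
  have := add_mem_Kset_of_mem_Mset hPp hPm (neg_mem_Mset hμ) hγ hneg
  rwa [← neg_add] at this

/-- Lemma 1.8 (vii),(viii): `(M + K) ∩ Δ ⊆ K` and `(M + (−K)) ∩ Δ ⊆ −K`. -/
theorem statement_3 (n : ℕ) (hn : 2 ≤ n) (Pp Pm : Set (Fin n → ℝ))
    (hPp : Pp ⊆ simpleRoots n) (hPm : Pm ⊆ simpleRoots n)
    (hU : Pp ∪ Pm = simpleRoots n) :
    (∀ μ ∈ Mset n Pp Pm, ∀ γ ∈ Kset n Pp Pm,
      μ + γ ∈ Delta n → μ + γ ∈ Kset n Pp Pm) ∧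
    (∀ μ ∈ Mset n Pp Pm, ∀ γ ∈ -Kset n Pp Pm,
      μ + γ ∈ Delta n → μ + γ ∈ -Kset n Pp Pm) :=
  statement_3_general n Pp Pm hPp hPm
end

section
/- Let n ≥ 2 and let π⁺, π⁻ be subsets of the simple roots π of sl_n with π⁺ ∪ π⁻ = π. If μ ∈ M, γ ∈ R_* and μ + γ ∈ Δ, then μ + γ ∈ R_*; if μ ∈ M, γ ∈ −R_* and μ + γ ∈ Δ, then μ + γ ∈ −R_*. (Lemma 1.8 (ix),(x).) -/
open Pointwise

/-!
Write a vector `β` of the root lattice as `∑ cᵢ αᵢ`; then `cᵢ = β₁ + ⋯ + βᵢ` (`simpleCoeff`).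
If `π⁺, π⁻` consist of simple roots, a root lies in `ℕπ⁺ ∪ -ℕπ⁻` exactly when its positive
coefficients sit on `π⁺` and its negative ones on `π⁻`, so `R = Δ ∩ C` for the additive
monoid `C = supportedBy π⁺ π⁻`. From this and `Δ = -Δ` alone, (ix) is formal: `-μ, -γ ∈ C`
give `-(μ + γ) ∈ C`, and `μ + γ ∈ C` would force `γ = -μ + (μ + γ) ∈ C`, i.e. `γ ∈ M`.
Part (x) is part (ix) for `-C`, which cuts out `-R`.
-/

section

variable {G : Type*} [AddCommGroup G] {Δ R : Set G} (C : AddSubmonoid G)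

lemma add_mem_rStar (hΔ : -Δ = Δ) (hR : R = Δ ∩ C) {μ γ : G} (hμ : μ ∈ R ∩ -R)
    (hγ : γ ∈ -R \ (R ∩ -R)) (hμγ : μ + γ ∈ Δ) : μ + γ ∈ -R \ (R ∩ -R) := by
  have neg_mem_Δ {x : G} (hx : x ∈ Δ) : -x ∈ Δ := by rwa [← hΔ, Set.neg_mem_neg]
  subst hR
  obtain ⟨⟨-, hμC⟩, -, hμC'⟩ := hμ
  obtain ⟨⟨hγΔ', hγC'⟩, hγM⟩ := hγ
  refine ⟨⟨neg_mem_Δ hμγ, by simpa [neg_add, add_comm] using C.add_mem hμC' hγC'⟩, ?_⟩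
  rintro ⟨⟨-, hC⟩, -⟩
  have hγC : γ ∈ C := by simpa using C.add_mem hμC' hC
  exact hγM ⟨⟨by simpa using neg_mem_Δ hγΔ', hγC⟩, hγΔ', hγC'⟩

lemma add_mem_neg_rStar (hΔ : -Δ = Δ) (hR : R = Δ ∩ C) {μ γ : G} (hμ : μ ∈ R ∩ -R)
    (hγ : γ ∈ -(-R \ (R ∩ -R))) (hμγ : μ + γ ∈ Δ) : μ + γ ∈ -(-R \ (R ∩ -R)) := by
  have hR' : -R = Δ ∩ (-C : AddSubmonoid G) := by
    rw [hR, Set.inter_neg, hΔ]; rfl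
  have key := add_mem_rStar (-C) hΔ hR' (μ := μ) (γ := γ)
  simp only [Set.mem_sdiff, Set.mem_inter_iff, Set.mem_neg, neg_neg] at key hμ hγ ⊢
  exact key hμ.symm hγ hμγ

end

section

variable {n : ℕ}

def simpleCoeff (i : Fin n) : (Fin n → ℝ) →ₗ[ℝ] ℝ :=
  ∑ t ∈ Finset.Iic i, LinearMap.proj t

lemma simpleCoeff_eps (i a : Fin n) : simpleCoeff i (eps n a) = if a ≤ i then 1 else 0 := by
  simp [simpleCoeff, eps, Finset.sum_pi_single']

lemma simpleCoeff_eps_sub_eps (i a b : Fin n) :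
    simpleCoeff i (eps n a - eps n b) = (if a ≤ i then 1 else 0) - (if b ≤ i then 1 else 0) := by
  rw [map_sub, simpleCoeff_eps, simpleCoeff_eps]

def supportedBy (P Q : Set (Fin n → ℝ)) : AddSubmonoid (Fin n → ℝ) where
  carrier := {v | ∀ i j : Fin n, (j : ℕ) = i + 1 →
    (0 < simpleCoeff i v → eps n i - eps n j ∈ P) ∧ (simpleCoeff i v < 0 → eps n i - eps n j ∈ Q)}
  zero_mem' := by simp
  add_mem' {v w} hv hw i j hij := by
    simp only [map_add]
    constructor <;> intro h
    · rcases lt_or_ge 0 (simpleCoeff i v) with hv' | hv'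
      · exact (hv i j hij).1 hv'
      · exact (hw i j hij).1 (by linarith)
    · rcases lt_or_ge (simpleCoeff i v) 0 with hv' | hv'
      · exact (hv i j hij).2 hv'
      · exact (hw i j hij).2 (by linarith)

lemma neg_mem_supportedBy {P Q : Set (Fin n → ℝ)} {v : Fin n → ℝ} :
    -v ∈ supportedBy P Q ↔ v ∈ supportedBy Q P := by
  simp [supportedBy, and_comm]

lemma simpleCoeff_simpleRoot (i : Fin n) {a b : Fin n} (hab : (b : ℕ) = a + 1) :
    simpleCoeff i (eps n a - eps n b) = if i = a then 1 else 0 := by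
  rw [simpleCoeff_eps_sub_eps]
  simp only [Fin.le_def, Fin.ext_iff]
  split_ifs <;> first | omega | norm_num

lemma nspan_subset_supportedBy {P : Set (Fin n → ℝ)} (hP : P ⊆ simpleRoots n)
    (Q : Set (Fin n → ℝ)) : Nspan P ⊆ supportedBy P Q := by
  refine AddSubmonoid.closure_le.mpr fun v hv i j hij => ?_
  obtain ⟨a, b, hab, rfl⟩ := hP hv
  rw [simpleCoeff_simpleRoot i hab]
  constructor <;> intro h <;> split_ifs at h with hia <;> norm_num at h
  obtain rfl : j = b := Fin.ext (by rw [hij, hab, hia])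
  rwa [hia]

lemma eps_sub_eps_mem_nspan {P : Set (Fin n → ℝ)} {i j : Fin n} (hij : i < j)
    (hP : ∀ k l : Fin n, i ≤ k → k < j → (l : ℕ) = k + 1 → eps n k - eps n l ∈ P) :
    eps n i - eps n j ∈ Nspan P := by
  obtain ⟨j, hj⟩ := j
  induction j with
  | zero => exact absurd hij (by simp [Fin.lt_def])
  | succ m ih =>
    have him : (i : ℕ) ≤ m := Nat.le_of_lt_succ hij
    have hm : m < n := by omega
    have hstep : eps n ⟨m, hm⟩ - eps n ⟨m + 1, hj⟩ ∈ Nspan P :=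
      AddSubmonoid.subset_closure (hP _ _ (Fin.le_def.mpr him) (Fin.lt_def.mpr (by simp)) rfl)
    rcases eq_or_lt_of_le him with him | him
    · obtain rfl : i = ⟨m, hm⟩ := Fin.ext him
      exact hstep
    · have hprefix : eps n i - eps n ⟨m, hm⟩ ∈ Nspan P :=
        ih hm him fun k l hik hkm hkl => hP k l hik (hkm.trans (Fin.lt_def.mpr (by simp))) hkl
      have hsum := AddSubmonoid.add_mem _ hprefix hstep
      rwa [sub_add_sub_cancel] at hsum

lemma eps_sub_eps_mem_nspan_of_mem_supportedBy {P Q : Set (Fin n → ℝ)} {i j : Fin n}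
    (hij : i < j) (h : eps n i - eps n j ∈ supportedBy P Q) : eps n i - eps n j ∈ Nspan P := by
  refine eps_sub_eps_mem_nspan hij fun k l hik hkj hkl => (h k l hkl).1 ?_
  rw [simpleCoeff_eps_sub_eps, if_pos hik, if_neg (not_le.mpr hkj)]
  norm_num

lemma neg_Delta : -Delta n = Delta n := by
  ext v
  constructor <;> rintro ⟨i, j, hij, h⟩
  · exact ⟨j, i, hij.symm, by rw [← neg_neg v, h, neg_sub]⟩
  · exact ⟨j, i, hij.symm, by rw [h, neg_sub]⟩

lemma Rset_eq_inter_supportedBy {Pp Pm : Set (Fin n → ℝ)} (hPp : Pp ⊆ simpleRoots n)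
    (hPm : Pm ⊆ simpleRoots n) : Rset n Pp Pm = Delta n ∩ supportedBy Pp Pm := by
  ext β
  constructor
  · rintro ⟨hβ | hβ, hΔ⟩
    · exact ⟨hΔ, nspan_subset_supportedBy hPp Pm hβ⟩
    · exact ⟨hΔ, neg_mem_supportedBy.mp (nspan_subset_supportedBy hPm Pp hβ)⟩
  · rintro ⟨⟨i, j, hij, rfl⟩, hβ⟩
    refine ⟨?_, i, j, hij, rfl⟩
    rcases hij.lt_or_gt with hij | hji
    · exact Or.inl (eps_sub_eps_mem_nspan_of_mem_supportedBy hij hβ)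
    · rw [SetLike.mem_coe, ← neg_sub, neg_mem_supportedBy] at hβ
      right
      rw [Set.mem_neg, neg_sub]
      exact eps_sub_eps_mem_nspan_of_mem_supportedBy hji hβ

end

theorem statement_4_general (n : ℕ) (Pp Pm : Set (Fin n → ℝ))
    (hPp : Pp ⊆ simpleRoots n) (hPm : Pm ⊆ simpleRoots n) :
    (∀ μ ∈ Mset n Pp Pm, ∀ γ ∈ RstarSet n Pp Pm,
      μ + γ ∈ Delta n → μ + γ ∈ RstarSet n Pp Pm) ∧
    (∀ μ ∈ Mset n Pp Pm, ∀ γ ∈ -RstarSet n Pp Pm,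
      μ + γ ∈ Delta n → μ + γ ∈ -RstarSet n Pp Pm) := by
  have hR := Rset_eq_inter_supportedBy hPp hPm
  exact ⟨fun μ hμ γ hγ => add_mem_rStar _ neg_Delta hR hμ hγ,
    fun μ hμ γ hγ => add_mem_neg_rStar _ neg_Delta hR hμ hγ⟩

/-- Lemma 1.8 (ix),(x): `(M + R_*) ∩ Δ ⊆ R_*` and `(M + (−R_*)) ∩ Δ ⊆ −R_*`. -/
theorem statement_4 (n : ℕ) (hn : 2 ≤ n) (Pp Pm : Set (Fin n → ℝ))
    (hPp : Pp ⊆ simpleRoots n) (hPm : Pm ⊆ simpleRoots n)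
    (hU : Pp ∪ Pm = simpleRoots n) :
    (∀ μ ∈ Mset n Pp Pm, ∀ γ ∈ RstarSet n Pp Pm,
      μ + γ ∈ Delta n → μ + γ ∈ RstarSet n Pp Pm) ∧
    (∀ μ ∈ Mset n Pp Pm, ∀ γ ∈ -RstarSet n Pp Pm,
      μ + γ ∈ Delta n → μ + γ ∈ -RstarSet n Pp Pm) :=
  statement_4_general n Pp Pm hPp hPm
end

section
/- If t ∈ [1,n] is not a fixed point of σ, then either 2t = n+1, or 2σ(t) = n+1, or the integers 2t−(n+1) and 2σ(t)−(n+1) have opposite signs (t and σ(t) lie on opposite sides of (n+1)/2). (Lemma 2.3 (ii).) -/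
/-- The order-reversing involution `κ(j) = n + 1 − j` of `[1,n]`. -/
def kappa (n : ℕ) : ℤ → ℤ := fun j => (n : ℤ) + 1 - j

/-- `[r, s−1]` is a connected component of the set `M` of marked indices. -/
def IsComponent (M : Set ℤ) (r s : ℤ) : Prop :=
  r ≤ s - 1 ∧ Set.Icc r (s - 1) ⊆ M ∧ r - 1 ∉ M ∧ s ∉ M

/-- `s⁻ = s − 1` if `n` is even and `s − 1 = n/2`, and `s⁻ = s` otherwise. -/
def sminus (n : ℕ) (s : ℤ) : ℤ :=
  if n % 2 = 0 ∧ s - 1 = ((n / 2 : ℕ) : ℤ) then s - 1 else s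

/-- The extended component `M_{r,s} = [r, s⁻] ∪ κ([r, s⁻])`. -/
def extComp (n : ℕ) (r s : ℤ) : Set ℤ :=
  Set.Icc r (sminus n s) ∪ kappa n '' Set.Icc r (sminus n s)

/-- Lemma 2.3 (ii): if `t ∈ [1,n]` is not fixed by `σ`, then `2t = n+1`, or `2σ(t) = n+1`,
or `t` and `σ(t)` lie on opposite sides of `(n+1)/2`. -/
theorem statement_7 (n : ℕ) (hn : 2 ≤ n)
    (M : Set ℤ) (hM : M ⊆ Set.Icc 1 ((n / 2 : ℕ) : ℤ))
    (σ : ℤ → ℤ)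
    (hσmap : ∀ t ∈ Set.Icc (1 : ℤ) (n : ℤ), σ t ∈ Set.Icc (1 : ℤ) (n : ℤ))
    (hσinv : ∀ t ∈ Set.Icc (1 : ℤ) (n : ℤ), σ (σ t) = t)
    (hout : ∀ t ∈ Set.Icc (1 : ℤ) (n : ℤ),
      (∀ r s : ℤ, IsComponent M r s → t ∉ extComp n r s) → σ t = kappa n t)
    (hstable : ∀ r s : ℤ, IsComponent M r s → ∀ t ∈ extComp n r s, σ t ∈ extComp n r s)
    (hTii : ∀ r s : ℤ, IsComponent M r s → ∀ t ∈ extComp n r s, σ t ≠ t →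
      (t ∈ Set.Icc r (sminus n s) ∧ σ t ∈ kappa n '' Set.Icc r (sminus n s)) ∨
      (σ t ∈ Set.Icc r (sminus n s) ∧ t ∈ kappa n '' Set.Icc r (sminus n s))) :
    ∀ t ∈ Set.Icc (1 : ℤ) (n : ℤ), σ t ≠ t →
      2 * t = (n : ℤ) + 1 ∨ 2 * σ t = (n : ℤ) + 1 ∨
      (2 * t - ((n : ℤ) + 1)) * (2 * σ t - ((n : ℤ) + 1)) < 0 := by
  intro t ht hne
  by_cases hc : ∀ r s : ℤ, IsComponent M r s → t ∉ extComp n r s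
  · have h := hout t ht hc
    rw [h]
    simp only [kappa]
    rcases eq_or_ne (2 * t) ((n : ℤ) + 1) with h1 | h1
    · left; exact h1
    · right; right
      have : 2 * t - ((n : ℤ) + 1) ≠ 0 := by omega
      have hp : 0 < (2 * t - ((n : ℤ) + 1)) * (2 * t - ((n : ℤ) + 1)) := mul_self_pos.mpr this
      nlinarith [hp]
  · push_neg at hc
    obtain ⟨r, s, hcomp, htmem⟩ := hc
    have hsM : s - 1 ∈ M := hcomp.2.1 ⟨hcomp.1, le_refl _⟩
    have hsle : s - 1 ≤ ((n / 2 : ℕ) : ℤ) := (hM hsM).2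
    have key : ∀ u : ℤ, u ≤ sminus n s → 2 * u ≤ (n : ℤ) + 1 := by
      intro u hu2
      unfold sminus at hu2
      split_ifs at hu2 with h <;> omega
    rcases hTii r s hcomp t htmem hne with ⟨ht1, u, hu, heq⟩ | ⟨hσ1, u, hu, heq⟩
    · have hA := key t ht1.2
      have hB := key u hu.2
      have hσt : σ t = (n : ℤ) + 1 - u := by rw [← heq]; rfl
      rcases eq_or_lt_of_le hA with h1 | h1
      · left; exact h1
      rcases eq_or_ne (2 * σ t) ((n : ℤ) + 1) with h2 | h2
      · right; left; exact h2
      right; right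
      exact mul_neg_of_neg_of_pos (by omega) (by omega)
    · have hA := key (σ t) hσ1.2
      have hB := key u hu.2
      have hteq : t = (n : ℤ) + 1 - u := by rw [← heq]; rfl
      rcases eq_or_ne (2 * t) ((n : ℤ) + 1) with h1 | h1
      · left; exact h1
      rcases eq_or_lt_of_le hA with h2 | h2
      · right; left; exact h2
      right; right
      exact mul_neg_of_pos_of_neg (by omega) (by omega)
end

section
/- Let 𝒥⁺, 𝒥⁻ be partitions of [1,n] into intervals and let σ⁺ (resp. σ⁻) be an involution of [1,n] adapted to 𝒥⁺ (resp. to 𝒥⁻). Let J⁺ ∈ 𝒥⁺ and J⁻ ∈ 𝒥⁻ have centres c⁺ and c⁻ with c⁺ < c⁻, and let t ∈ J⁺ ∩ J⁻ satisfy σ⁺(t) ≠ t, σ⁻(t) ≠ t and (t − σ⁺(t))(t − σ⁻(t)) < 0 (t is an internal turning point). Then c⁺ ≤ t ≤ c⁻ and σ⁺(t) < t < σ⁻(t) (t is a sink). (Lemma 3.4.5.1 (i), with the properties of the modified involutions made explicit as hypotheses.) -/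
/-- A partition of `[1,n]` into (nonempty) integer intervals. -/
def IsIntervalPartitionZ (n : ℤ) (J : Set (Set ℤ)) : Prop :=
  (∀ I ∈ J, ∃ r s : ℤ, r ≤ s ∧ I = Set.Icc r s) ∧
  (⋃₀ J = Set.Icc 1 n) ∧
  (∀ I ∈ J, ∀ I' ∈ J, I ≠ I' → Disjoint I I')

/-- `σ` is an involution of `[1,n]` adapted to the partition `J`: it maps each component to
itself and maps every non-fixed point weakly across the centre of its component
(`(2t − 2c)(2σ(t) − 2c) ≤ 0`, where `2c = r + s` for the component `[r,s]`). -/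
def AdaptedTo (n : ℤ) (σ : ℤ → ℤ) (J : Set (Set ℤ)) : Prop :=
  (∀ I ∈ J, ∀ t ∈ I, σ t ∈ I) ∧
  (∀ t ∈ Set.Icc (1 : ℤ) n, σ (σ t) = t) ∧
  (∀ r s : ℤ, Set.Icc r s ∈ J → ∀ t ∈ Set.Icc r s, σ t ≠ t →
    (2 * t - (r + s)) * (2 * σ t - (r + s)) ≤ 0)

/-- Lemma 3.4.5.1 (i): if `centre(J⁺) < centre(J⁻)` then an internal turning point
`t ∈ J⁺ ∩ J⁻` satisfies `c⁺ ≤ t ≤ c⁻` and is a sink (`σ⁺(t) < t < σ⁻(t)`). Centres are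
compared via `2c = r + s`. -/
theorem statement_9 (n : ℤ) (hn : 2 ≤ n)
    (Jp Jm : Set (Set ℤ))
    (hJp : IsIntervalPartitionZ n Jp) (hJm : IsIntervalPartitionZ n Jm)
    (σp σm : ℤ → ℤ)
    (hσp : AdaptedTo n σp Jp) (hσm : AdaptedTo n σm Jm)
    (rp sp rm sm : ℤ) (hrp : rp ≤ sp) (hrm : rm ≤ sm)
    (hp : Set.Icc rp sp ∈ Jp) (hm : Set.Icc rm sm ∈ Jm)
    (hc : rp + sp < rm + sm)
    (t : ℤ) (ht : t ∈ Set.Icc rp sp ∩ Set.Icc rm sm)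
    (h1 : σp t ≠ t) (h2 : σm t ≠ t)
    (h3 : (t - σp t) * (t - σm t) < 0) :
    rp + sp ≤ 2 * t ∧ 2 * t ≤ rm + sm ∧ σp t < t ∧ t < σm t := by
  have hap := hσp.2.2 rp sp hp t ht.1 h1
  have ham := hσm.2.2 rm sm hm t ht.2 h2
  have h2b : σm t ≤ t ∨ t ≤ σm t := le_total _ _
  have hP : rp + sp ≤ 2 * t := by
    by_contra h
    push_neg at h
    have ha : t < σp t := by nlinarith
    have hb : σm t < t := by nlinarith
    nlinarith
  have hM : 2 * t ≤ rm + sm := by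
    by_contra h
    push_neg at h
    have hb : σm t < t := by nlinarith
    have ha : t < σp t := by nlinarith
    nlinarith
  refine ⟨hP, hM, ?_⟩
  rcases lt_or_eq_of_le hP with h | h
  · have ha : σp t < t := by
      rcases lt_or_gt_of_ne h1 with h' | h'
      · exact h'
      · nlinarith
    have hb : t < σm t := by nlinarith
    exact ⟨ha, hb⟩
  · have hb : t < σm t := by
      rcases lt_or_gt_of_ne h2 with h' | h'
      · nlinarith
      · exact h'
    have ha : σp t < t := by nlinarith
    exact ⟨ha, hb⟩
end

section
/- Let 𝒥⁺, 𝒥⁻ be partitions of [1,n] into intervals and let σ⁺ (resp. σ⁻) be an involution of [1,n] adapted to 𝒥⁺ (resp. to 𝒥⁻). Let J⁺ ∈ 𝒥⁺ and J⁻ ∈ 𝒥⁻ have centres c⁺ and c⁻ with c⁺ > c⁻, and let t ∈ J⁺ ∩ J⁻ satisfy σ⁺(t) ≠ t, σ⁻(t) ≠ t and (t − σ⁺(t))(t − σ⁻(t)) < 0 (t is an internal turning point). Then c⁻ ≤ t ≤ c⁺ and σ⁻(t) < t < σ⁺(t) (t is a source). (Lemma 3.4.5.2 (iv), with the properties of the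 modified involutions made explicit as hypotheses.) -/
/-- Lemma 3.4.5.2 (iv): if `centre(J⁺) > centre(J⁻)` then an internal turning point
`t ∈ J⁺ ∩ J⁻` satisfies `c⁻ ≤ t ≤ c⁺` and is a source (`σ⁻(t) < t < σ⁺(t)`). Centres are
compared via `2c = r + s`. -/
theorem statement_10 (n : ℤ) (hn : 2 ≤ n)
    (Jp Jm : Set (Set ℤ))
    (hJp : IsIntervalPartitionZ n Jp) (hJm : IsIntervalPartitionZ n Jm)
    (σp σm : ℤ → ℤ)
    (hσp : AdaptedTo n σp Jp) (hσm : AdaptedTo n σm Jm)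
    (rp sp rm sm : ℤ) (hrp : rp ≤ sp) (hrm : rm ≤ sm)
    (hp : Set.Icc rp sp ∈ Jp) (hm : Set.Icc rm sm ∈ Jm)
    (hc : rm + sm < rp + sp)
    (t : ℤ) (ht : t ∈ Set.Icc rp sp ∩ Set.Icc rm sm)
    (h1 : σp t ≠ t) (h2 : σm t ≠ t)
    (h3 : (t - σp t) * (t - σm t) < 0) :
    rm + sm ≤ 2 * t ∧ 2 * t ≤ rp + sp ∧ σm t < t ∧ t < σp t := by
  have A := hσp.2.2 rp sp hp t ht.1 h1
  have B := hσm.2.2 rm sm hm t ht.2 h2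
  rcases lt_or_gt_of_ne h1 with hlt | hgt
  · -- σp t < t : derive contradiction
    exfalso
    have hmm : t < σm t := by nlinarith
    have h4 : rp + sp ≤ 2 * t := by nlinarith
    have h5 : 2 * t ≤ rm + sm := by nlinarith
    linarith
  · -- t < σp t
    have hmm : σm t < t := by nlinarith
    refine ⟨by nlinarith, by nlinarith, hmm, hgt⟩
end

section
/- Let 𝒥⁺, 𝒥⁻ be partitions of [1,n] into intervals and let σ⁺ (resp. σ⁻) be an involution of [1,n] adapted to 𝒥⁺ (resp. to 𝒥⁻). Let J⁺ ∈ 𝒥⁺ and J⁻ ∈ 𝒥⁻ have equal centres c⁺ = c⁻ = c, and assume that if c is an integer then c is a fixed point of σ⁺ or of σ⁻. Then no point of J⁺ ∩ J⁻ is an internal turning point; that is, there is no t ∈ J⁺ ∩ J⁻ with σ⁺(t) ≠ t, σ⁻(t) ≠ t and (t − σ⁺(t))(t − σ⁻(t)) < 0. (Lemma 3.4.5.3 (vii), with the properties guaranteed by the marking rules made explicit as hypotheses.) -/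
/-- Lemma 3.4.5.3 (vii): if `centre(J⁺) = centre(J⁻) = c` and, whenever `c` is an integer,
`c` is a fixed point of `σ⁺` or of `σ⁻`, then `J⁺ ∩ J⁻` contains no internal turning point. -/
theorem statement_11 (n : ℤ) (hn : 2 ≤ n)
    (Jp Jm : Set (Set ℤ))
    (hJp : IsIntervalPartitionZ n Jp) (hJm : IsIntervalPartitionZ n Jm)
    (σp σm : ℤ → ℤ)
    (hσp : AdaptedTo n σp Jp) (hσm : AdaptedTo n σm Jm)
    (rp sp rm sm : ℤ) (hrp : rp ≤ sp) (hrm : rm ≤ sm)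
    (hp : Set.Icc rp sp ∈ Jp) (hm : Set.Icc rm sm ∈ Jm)
    (hc : rp + sp = rm + sm)
    (hcfix : ∀ c : ℤ, 2 * c = rp + sp → σp c = c ∨ σm c = c) :
    ¬ ∃ t ∈ Set.Icc rp sp ∩ Set.Icc rm sm,
      σp t ≠ t ∧ σm t ≠ t ∧ (t - σp t) * (t - σm t) < 0 := by
  rintro ⟨t, ⟨htp, htm⟩, hp1, hm1, hprod⟩
  have h1 := hσp.2.2 rp sp hp t htp hp1
  have h2 := hσm.2.2 rm sm hm t htm hm1
  rcases lt_trichotomy (2 * t) (rp + sp) with h | h | h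
  · have hA : t < σp t := by nlinarith [h1]
    have hB : t < σm t := by nlinarith [h2]
    nlinarith [hprod]
  · rcases hcfix t h with hf | hf
    · exact hp1 hf
    · exact hm1 hf
  · have hA : σp t < t := by nlinarith [h1]
    have hB : σm t < t := by nlinarith [h2]
    nlinarith [hprod]
end

section
/- Let 𝒥⁺, 𝒥⁻ be partitions of [1,n] into intervals with π⁺ ∪ π⁻ = π, and let σ⁺, σ⁻ be involutions of [1,n]. Let (x_1,…,x_e; τ) be an edge for (σ⁺,σ⁻) such that ε_i β_i ∈ R for every 1 ≤ i ≤ e−1 and such that no x_i with 1 < i < e is an internal turning point. If x_1 and x_e do not lie in a common double component (there is no pair J⁺ ∈ 𝒥⁺, J⁻ ∈ 𝒥⁻ with x_1, x_e ∈ J⁺ ∩ J⁻), then ε_1 = ε_2 = … = ε_{e−1} and ε_1(ε_{x_1} − ε_{x_e}) ∈ −R_*. (Corollary 3.8.4, with the conclusion of Proposition 3.8.4 on the end-points made an explicit hypothesis.) -/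
open Pointwise

/-- A partition of `[1,n]` (as `Fin n`) into (nonempty) intervals. -/
def IsIntervalPartitionF (n : ℕ) (J : Set (Set (Fin n))) : Prop :=
  (∀ I ∈ J, ∃ a b : Fin n, a ≤ b ∧ I = Set.Icc a b) ∧
  (⋃₀ J = Set.univ) ∧
  (∀ I ∈ J, ∀ I' ∈ J, I ≠ I' → Disjoint I I')

/-- The set `π` of simple roots `α_i` such that `i` and `i+1` lie in a common component of the
partition `J`. -/
def piOf (n : ℕ) (J : Set (Set (Fin n))) : Set (Fin n → ℝ) :=
  {v | ∃ i j : Fin n, (j : ℕ) = (i : ℕ) + 1 ∧ v = eps n i - eps n j ∧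
    ∃ I ∈ J, i ∈ I ∧ j ∈ I}

/-- An edge for the pair of involutions `(σp, σm)`: a sequence `x 0, …, x (e−1)` of distinct
points with alternating labels `τ 0, …, τ (e−2)` (`true` = `+`), where consecutive points are
exchanged by the corresponding involution, and the two end-points are fixed by the involution
of opposite sign to the adjacent label. (Indices are 0-based.) -/
def IsEdge {n : ℕ} (e : ℕ) (σp σm : Fin n → Fin n) (x : ℕ → Fin n) (τ : ℕ → Bool) : Prop :=
  2 ≤ e ∧
  (∀ i j, i < e → j < e → x i = x j → i = j) ∧
  (∀ i, i + 2 < e → τ (i + 1) = !(τ i)) ∧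
  (∀ i, i + 1 < e → x (i + 1) = (if τ i then σp else σm) (x i) ∧ x (i + 1) ≠ x i) ∧
  (if τ 0 then σm else σp) (x 0) = x 0 ∧
  (if τ (e - 2) then σm else σp) (x (e - 1)) = x (e - 1)

/-- `x i` is an internal turning point: `0 < i < e − 1` and `x i − x (i−1)` and
`x i − x (i+1)` have opposite signs. -/
def InternalTP {n : ℕ} (e : ℕ) (x : ℕ → Fin n) (i : ℕ) : Prop :=
  0 < i ∧ i + 1 < e ∧
    (((x i : ℕ) : ℤ) - ((x (i - 1) : ℕ) : ℤ)) * (((x i : ℕ) : ℤ) - ((x (i + 1) : ℕ) : ℤ)) < 0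

/-- A turning point of the edge: one of the two end-points, or an internal turning point. -/
def TurningPt {n : ℕ} (e : ℕ) (x : ℕ → Fin n) (i : ℕ) : Prop :=
  i = 0 ∨ i = e - 1 ∨ InternalTP e x i

/-- The sign convention: `ε_i ∈ {1, −1}` is defined by `ε_i β_i ∈ Δ⁺` if `τ_i = +` and
`ε_i β_i ∈ Δ⁻` if `τ_i = −`, where `β_i = ε_{x_i} − ε_{x_{i+1}}`. -/
def SignConv {n : ℕ} (e : ℕ) (x : ℕ → Fin n) (τ : ℕ → Bool) (εf : ℕ → ℤ) : Prop :=
  ∀ i, i + 1 < e → (εf i = 1 ∨ εf i = -1) ∧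
    (τ i = true → (εf i : ℝ) • (eps n (x i) - eps n (x (i + 1))) ∈ DeltaPos n) ∧
    (τ i = false → (εf i : ℝ) • (eps n (x i) - eps n (x (i + 1))) ∈ DeltaNeg n)

/-!
Cutting a vector after position `k` (summing its first `k + 1` coordinates) is nonnegative on
`ℕπ_𝒥`, and positive only if `k` and `k + 1` lie in one component of `𝒥`. Since no internal
turning point means that the edge zigzags while its labels alternate, all `ε_i` are equal, and
`ε_1(ε_{x_1} − ε_{x_e})` telescopes to `u − v` with `u ∈ ℕπ⁺`, `v ∈ ℕπ⁻`. For `c < d`, every cut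
between `c` and `d` takes the value `1` on `ε_c − ε_d`, hence is positive on `u`: so
`ε_c − ε_d ∈ ℕπ⁺`, and `c, d` share a component of `𝒥⁺`. Its negative cannot lie in `ℕπ⁺`
(the cut at `c` would be `−1`), nor in `−ℕπ⁻`, since then `c, d` would also share a component of
`𝒥⁻`. The case `c > d` is the same with `𝒥⁺` and `𝒥⁻` exchanged.
-/

namespace SlnEdge

variable {n : ℕ}

section Blocks

variable {α : Type*} {J : Set (Set α)} {a b c : α}

def SameBlock (J : Set (Set α)) (a b : α) : Prop := ∃ I ∈ J, a ∈ I ∧ b ∈ I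

def IsBlockPartition (J : Set (Set α)) : Prop := ⋃₀ J = Set.univ ∧ J.Pairwise Disjoint

lemma SameBlock.symm (h : SameBlock J a b) : SameBlock J b a :=
  let ⟨I, hI, ha, hb⟩ := h
  ⟨I, hI, hb, ha⟩

lemma IsBlockPartition.sameBlock_refl (hJ : IsBlockPartition J) (a : α) : SameBlock J a a := by
  obtain ⟨I, hI, ha⟩ := Set.mem_sUnion.1 (hJ.1 ▸ Set.mem_univ a)
  exact ⟨I, hI, ha, ha⟩

lemma IsBlockPartition.sameBlock_trans (hJ : IsBlockPartition J) (hab : SameBlock J a b)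
    (hbc : SameBlock J b c) : SameBlock J a c := by
  obtain ⟨I, hI, ha, hb⟩ := hab
  obtain ⟨I', hI', hb', hc⟩ := hbc
  obtain rfl : I = I' := by
    by_contra hne
    exact Set.disjoint_left.1 (hJ.2 hI hI' hne) hb hb'
  exact ⟨I, hI, ha, hc⟩

end Blocks

lemma IsIntervalPartitionF.isBlockPartition {J : Set (Set (Fin n))}
    (hJ : IsIntervalPartitionF n J) : IsBlockPartition J :=
  ⟨hJ.2.1, hJ.2.2⟩

lemma Fin.induction_between {P : Fin n → Prop} {c d : Fin n} (hcd : c ≤ d) (hc : P c)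
    (hstep : ∀ k k' : Fin n, (k' : ℕ) = k + 1 → c ≤ k → k' ≤ d → P k → P k') : P d := by
  obtain ⟨m, hm⟩ : ∃ m, (d : ℕ) = c + m := ⟨d - c, by rw [Fin.le_def] at hcd; omega⟩
  induction m generalizing d with
  | zero => exact (Fin.ext hm : d = c) ▸ hc
  | succ m ih =>
    let k : Fin n := ⟨c + m, by omega⟩
    have hkd : k ≤ d := by rw [Fin.le_def]; simp [k]; omega
    refine hstep k d (by simp [k]; omega) (by rw [Fin.le_def]; simp [k]) le_rfl ?_
    exact ih (by rw [Fin.le_def]; simp [k]) (fun j j' hj hcj hj'k => hstep j j' hj hcj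
      (hj'k.trans hkd)) rfl

def Chained (J : Set (Set (Fin n))) (c d : Fin n) : Prop :=
  ∀ k k' : Fin n, (k' : ℕ) = k + 1 → c ≤ k → k' ≤ d → SameBlock J k k'

lemma Chained.sameBlock {J : Set (Set (Fin n))} {c d : Fin n} (hJ : IsBlockPartition J)
    (hch : Chained J c d) (hcd : c ≤ d) : SameBlock J c d :=
  Fin.induction_between hcd (hJ.sameBlock_refl c) fun k k' hk hck hkd hc =>
    hJ.sameBlock_trans hc (hch k k' hk hck hkd)

lemma mem_Nspan_iff {S : Set (Fin n → ℝ)} {v : Fin n → ℝ} :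
    v ∈ Nspan S ↔ v ∈ AddSubmonoid.closure S :=
  Iff.rfl

lemma Chained.eps_sub_eps_mem_Nspan {J : Set (Set (Fin n))} {c d : Fin n}
    (hch : Chained J c d) (hcd : c ≤ d) : eps n c - eps n d ∈ Nspan (piOf n J) := by
  refine Fin.induction_between (P := fun k => eps n c - eps n k ∈ Nspan (piOf n J)) hcd
    (by rw [sub_self]; exact zero_mem (AddSubmonoid.closure _)) ?_
  intro k k' hk hck hkd hc
  rw [mem_Nspan_iff] at hc ⊢
  have hgen : eps n k - eps n k' ∈ AddSubmonoid.closure (piOf n J) :=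
    AddSubmonoid.subset_closure ⟨k, k', hk, rfl, hch k k' hk hck hkd⟩
  simpa using add_mem hc hgen

/-- On the root lattice, `cut k` is the coefficient of `ε_k − ε_{k+1}`. -/
def cut (k : Fin n) : (Fin n → ℝ) →+ ℝ where
  toFun v := ∑ j ∈ Finset.Iic k, v j
  map_zero' := by simp
  map_add' v w := by simp [Finset.sum_add_distrib]

lemma cut_eps (k i : Fin n) : cut k (eps n i) = if i ≤ k then 1 else 0 := by
  simp [cut, eps, Pi.single_apply, Finset.sum_ite_eq']

lemma cut_eps_sub_eps (k i j : Fin n) :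
    cut k (eps n i - eps n j) = (if i ≤ k then 1 else 0) - (if j ≤ k then 1 else 0) := by
  rw [map_sub, cut_eps, cut_eps]

section Cuts

variable {J : Set (Set (Fin n))} {v : Fin n → ℝ}

lemma cut_nonneg (hv : v ∈ Nspan (piOf n J)) (k : Fin n) : 0 ≤ cut k v := by
  rw [mem_Nspan_iff] at hv
  induction hv using AddSubmonoid.closure_induction with
  | mem w hw =>
    obtain ⟨i, j, hij, rfl, -⟩ := hw
    rw [cut_eps_sub_eps]
    split_ifs with hi hj hj <;> norm_num
    exact hi (le_trans (by rw [Fin.le_def]; omega) hj)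
  | zero => simp
  | add a b _ _ ha hb => rw [map_add]; exact add_nonneg ha hb

lemma sameBlock_of_cut_pos (hv : v ∈ Nspan (piOf n J)) {k k' : Fin n}
    (hk : (k' : ℕ) = k + 1) (hpos : 0 < cut k v) : SameBlock J k k' := by
  rw [mem_Nspan_iff] at hv
  induction hv using AddSubmonoid.closure_induction with
  | mem w hw =>
    obtain ⟨i, j, hij, rfl, hblock⟩ := hw
    rw [cut_eps_sub_eps] at hpos
    split_ifs at hpos with hi hj <;> norm_num at hpos
    obtain rfl : i = k := Fin.ext (by rw [Fin.le_def] at hi hj; omega)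
    obtain rfl : j = k' := Fin.ext (by omega)
    exact hblock
  | zero => simp at hpos
  | add a b _ _ ha hb =>
    rw [map_add] at hpos
    rcases lt_or_ge 0 (cut k a) with h | h
    · exact ha h
    · exact hb (by linarith)

lemma chained_of_eps_sub_eps_eq_sub {J' : Set (Set (Fin n))} {c d : Fin n} {u : Fin n → ℝ}
    (hu : u ∈ Nspan (piOf n J)) (hv : v ∈ Nspan (piOf n J'))
    (h : eps n c - eps n d = u - v) : Chained J c d := by
  intro k k' hk hck hkd
  have hcut : cut k u - cut k v = 1 := by
    rw [← map_sub, ← h, cut_eps_sub_eps, if_pos hck,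
      if_neg (by rw [Fin.le_def] at hkd ⊢; omega)]
    norm_num
  exact sameBlock_of_cut_pos hu hk (by linarith [cut_nonneg hv k])

lemma eps_sub_eps_notMem_Nspan {c d : Fin n} (hcd : c < d) :
    eps n d - eps n c ∉ Nspan (piOf n J) := fun h => by
  have := cut_nonneg h c
  rw [cut_eps_sub_eps, if_neg (not_le.2 hcd), if_pos le_rfl] at this
  norm_num at this

end Cuts

lemma neg_Delta : -Delta n = Delta n := by
  ext v
  constructor
  · rintro ⟨i, j, hij, hv⟩
    exact ⟨j, i, hij.symm, by rw [← neg_neg v, hv, neg_sub]⟩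
  · rintro ⟨i, j, hij, rfl⟩
    exact ⟨j, i, hij.symm, by rw [neg_sub]⟩

lemma Rset_swap (P Q : Set (Fin n → ℝ)) : Rset n Q P = -Rset n P Q := by
  rw [Rset, Rset, Set.inter_neg, Set.union_neg, neg_Delta, neg_neg, Set.union_comm]

lemma mem_neg_RstarSet {P Q : Set (Fin n → ℝ)} {v : Fin n → ℝ}
    (h : v ∈ Rset n P Q \ -Rset n P Q) : v ∈ -RstarSet n P Q :=
  ⟨by simpa [Set.mem_neg] using h.1, fun hM => h.2 hM.1⟩

section Roots

variable {Jp Jm : Set (Set (Fin n))} {u v : Fin n → ℝ}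

lemma eps_sub_eps_mem_Rset_diff_of_lt (hJp : IsBlockPartition Jp) (hJm : IsBlockPartition Jm)
    {c d : Fin n} (hcd : c < d) (hu : u ∈ Nspan (piOf n Jp)) (hv : v ∈ Nspan (piOf n Jm))
    (h : eps n c - eps n d = u - v) (hnc : ¬ (SameBlock Jp c d ∧ SameBlock Jm c d)) :
    eps n c - eps n d ∈ Rset n (piOf n Jp) (piOf n Jm) \ -Rset n (piOf n Jp) (piOf n Jm) := by
  have hchp := chained_of_eps_sub_eps_eq_sub hu hv h
  refine ⟨⟨Or.inl (hchp.eps_sub_eps_mem_Nspan hcd.le), c, d, hcd.ne, rfl⟩, ?_⟩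
  rintro ⟨hmem | hmem, -⟩
  · exact eps_sub_eps_notMem_Nspan hcd (by simpa using hmem)
  · have hm : eps n c - eps n d ∈ Nspan (piOf n Jm) := by simpa [Set.mem_neg] using hmem
    have hchm : Chained Jm c d := chained_of_eps_sub_eps_eq_sub hm
      (zero_mem (AddSubmonoid.closure (piOf n Jm))) (sub_zero _).symm
    exact hnc ⟨hchp.sameBlock hJp hcd.le, hchm.sameBlock hJm hcd.le⟩

lemma eps_sub_eps_mem_Rset_diff (hJp : IsBlockPartition Jp) (hJm : IsBlockPartition Jm)
    {a b : Fin n} (hab : a ≠ b) (hu : u ∈ Nspan (piOf n Jp)) (hv : v ∈ Nspan (piOf n Jm))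
    (h : eps n a - eps n b = u - v) (hnc : ¬ (SameBlock Jp a b ∧ SameBlock Jm a b)) :
    eps n a - eps n b ∈ Rset n (piOf n Jp) (piOf n Jm) \ -Rset n (piOf n Jp) (piOf n Jm) := by
  rcases hab.lt_or_gt with hlt | hgt
  · exact eps_sub_eps_mem_Rset_diff_of_lt hJp hJm hlt hu hv h hnc
  · have hswap := eps_sub_eps_mem_Rset_diff_of_lt hJm hJp hgt hv hu
      (by rw [← neg_sub, h, neg_sub]) fun ⟨hm, hp⟩ => hnc ⟨hp.symm, hm.symm⟩
    rw [Rset_swap, ← neg_sub] at hswap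
    simpa [Set.mem_neg] using hswap

lemma smul_eps_sub_eps_mem_Rset_diff (hJp : IsBlockPartition Jp) (hJm : IsBlockPartition Jm)
    {s : ℤ} (hs : s = 1 ∨ s = -1) {a b : Fin n} (hab : a ≠ b) (hu : u ∈ Nspan (piOf n Jp))
    (hv : v ∈ Nspan (piOf n Jm)) (h : (s : ℝ) • (eps n a - eps n b) = u - v)
    (hnc : ¬ (SameBlock Jp a b ∧ SameBlock Jm a b)) :
    (s : ℝ) • (eps n a - eps n b) ∈
      Rset n (piOf n Jp) (piOf n Jm) \ -Rset n (piOf n Jp) (piOf n Jm) := by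
  rcases hs with rfl | rfl
  · simp only [Int.cast_one, one_smul] at h ⊢
    exact eps_sub_eps_mem_Rset_diff hJp hJm hab hu hv h hnc
  · simp only [Int.cast_neg, Int.cast_one, neg_one_smul, neg_sub] at h ⊢
    exact eps_sub_eps_mem_Rset_diff hJp hJm hab.symm hu hv h
      fun ⟨hp, hm⟩ => hnc ⟨hp.symm, hm.symm⟩

end Roots

section Signs

lemma eq_of_eps_sub_eps_eq {a b p q : Fin n} (hab : a ≠ b)
    (h : eps n a - eps n b = eps n p - eps n q) : a = p ∧ b = q := by
  have ha := congrFun h a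
  have hb := congrFun h b
  simp only [Pi.sub_apply, eps, Pi.single_apply, if_neg hab, if_neg hab.symm] at ha hb
  constructor
  · by_contra hap
    rw [if_neg hap] at ha
    split_ifs at ha <;> norm_num at ha
  · by_contra hbq
    rw [if_neg hbq] at hb
    split_ifs at hb <;> norm_num at hb

lemma eps_sub_eps_mem_DeltaPos_iff {a b : Fin n} : eps n a - eps n b ∈ DeltaPos n ↔ a < b := by
  refine ⟨fun ⟨p, q, hpq, h⟩ => ?_, fun hab => ⟨a, b, hab, rfl⟩⟩
  obtain ⟨rfl, rfl⟩ := eq_of_eps_sub_eps_eq hpq.ne h.symm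
  exact hpq

lemma eps_sub_eps_mem_DeltaNeg_iff {a b : Fin n} : eps n a - eps n b ∈ DeltaNeg n ↔ b < a := by
  rw [DeltaNeg, Set.mem_neg, neg_sub, eps_sub_eps_mem_DeltaPos_iff]

variable {e : ℕ} {σp σm : Fin n → Fin n} {x : ℕ → Fin n} {τ : ℕ → Bool} {εf : ℕ → ℤ}

lemma sign_eq_one_iff (hsign : SignConv e x τ εf) {i : ℕ} (hi : i + 1 < e) :
    εf i = 1 ↔ (τ i = true ↔ x i < x (i + 1)) := by
  obtain ⟨hs, hpos, hneg⟩ := hsign i hi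
  rcases hs with h | h <;> rw [h] at hpos hneg ⊢ <;> cases hτ : τ i <;>
    simp [hτ, neg_sub, eps_sub_eps_mem_DeltaPos_iff, eps_sub_eps_mem_DeltaNeg_iff]
      at hpos hneg ⊢ <;> omega

lemma lt_iff_not_lt_of_not_internalTP {i : ℕ} (hturn : ¬ InternalTP e x (i + 1))
    (hi : i + 2 < e) (h₁ : x i ≠ x (i + 1)) (h₂ : x (i + 1) ≠ x (i + 2)) :
    x (i + 1) < x (i + 2) ↔ ¬ x i < x (i + 1) := by
  simp only [InternalTP, Nat.add_sub_cancel, not_and, not_lt, mul_nonneg_iff] at hturn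
  have hprod : _ ∨ _ := hturn (by omega) (by omega)
  rw [show i + 1 + 1 = i + 2 from rfl] at hprod
  have h₁' := Fin.val_ne_of_ne h₁
  have h₂' := Fin.val_ne_of_ne h₂
  simp only [Fin.lt_def]
  omega

lemma sign_eq_sign_zero (hedge : IsEdge e σp σm x τ) (hsign : SignConv e x τ εf)
    (hnoturn : ∀ i, ¬ InternalTP e x i) : ∀ i, i + 1 < e → εf i = εf 0 := by
  obtain ⟨-, -, hτ, hstep, -, -⟩ := hedge
  intro i
  induction i with
  | zero => exact fun _ => rfl
  | succ i ih =>
    intro hi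
    have hiff : εf (i + 1) = 1 ↔ εf i = 1 := by
      rw [sign_eq_one_iff hsign hi, sign_eq_one_iff hsign (by omega), hτ i (by omega),
        lt_iff_not_lt_of_not_internalTP (hnoturn (i + 1)) (by omega)
          (hstep i (by omega)).2.symm (hstep (i + 1) hi).2.symm]
      cases τ i <;> simp
    have h₁ := (hsign i (by omega)).1
    have h₂ := (hsign (i + 1) hi).1
    rw [← ih (by omega)]
    omega

end Signs

lemma exists_sum_eq_sub {ι G : Type*} [AddCommGroup G] {S T : AddSubmonoid G} (s : Finset ι)
    (f : ι → G) (hf : ∀ i ∈ s, f i ∈ S ∨ -f i ∈ T) :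
    ∃ u ∈ S, ∃ v ∈ T, ∑ i ∈ s, f i = u - v := by
  have hsum : ∑ i ∈ s, f i ∈ S ⊔ -T := sum_mem fun i hi =>
    (hf i hi).elim (fun h => AddSubmonoid.mem_sup_left h)
      (fun h => AddSubmonoid.mem_sup_right (AddSubmonoid.mem_neg.2 h))
  obtain ⟨u, hu, w, hw, h⟩ := AddSubmonoid.mem_sup.1 hsum
  exact ⟨u, hu, -w, AddSubmonoid.mem_neg.1 hw, by rw [← h, sub_neg_eq_add]⟩

lemma exists_smul_eps_sub_eps_eq_sub {e : ℕ} {x : ℕ → Fin n} {εf : ℕ → ℤ}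
    {Jp Jm : Set (Set (Fin n))} (hconst : ∀ i, i + 1 < e → εf i = εf 0)
    (hR : ∀ i, i + 1 < e →
      (εf i : ℝ) • (eps n (x i) - eps n (x (i + 1))) ∈ Rset n (piOf n Jp) (piOf n Jm)) :
    ∃ u ∈ Nspan (piOf n Jp), ∃ v ∈ Nspan (piOf n Jm),
      (εf 0 : ℝ) • (eps n (x 0) - eps n (x (e - 1))) = u - v := by
  have htelescope : (εf 0 : ℝ) • (eps n (x 0) - eps n (x (e - 1))) =
      ∑ i ∈ Finset.range (e - 1), (εf i : ℝ) • (eps n (x i) - eps n (x (i + 1))) := by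
    rw [← Finset.sum_range_sub' (fun i => eps n (x i)), Finset.smul_sum]
    exact Finset.sum_congr rfl fun i hi => by rw [hconst i (by simp at hi; omega)]
  rw [htelescope]
  exact exists_sum_eq_sub (S := AddSubmonoid.closure (piOf n Jp))
    (T := AddSubmonoid.closure (piOf n Jm)) _ _ fun i hi => (hR i (by simp at hi; omega)).1

end SlnEdge

open SlnEdge in
theorem statement_12_general (n : ℕ)
    (Jp Jm : Set (Set (Fin n)))
    (hJp : IsIntervalPartitionF n Jp) (hJm : IsIntervalPartitionF n Jm)
    (σp σm : Fin n → Fin n)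
    (e : ℕ) (x : ℕ → Fin n) (τ : ℕ → Bool)
    (hedge : IsEdge e σp σm x τ)
    (εf : ℕ → ℤ) (hsign : SignConv e x τ εf)
    (hR : ∀ i, i + 1 < e →
      (εf i : ℝ) • (eps n (x i) - eps n (x (i + 1))) ∈ Rset n (piOf n Jp) (piOf n Jm))
    (hnoturn : ∀ i, ¬ InternalTP e x i)
    (hnocommon : ¬ ∃ Ip ∈ Jp, ∃ Im ∈ Jm,
      x 0 ∈ Ip ∧ x 0 ∈ Im ∧ x (e - 1) ∈ Ip ∧ x (e - 1) ∈ Im) :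
    (∀ i j, i + 1 < e → j + 1 < e → εf i = εf j) ∧
    (εf 0 : ℝ) • (eps n (x 0) - eps n (x (e - 1)))
      ∈ -RstarSet n (piOf n Jp) (piOf n Jm) := by
  have hconst := sign_eq_sign_zero hedge hsign hnoturn
  obtain ⟨he, hinj, -⟩ := hedge
  have hends : x 0 ≠ x (e - 1) := fun h => by
    have := hinj 0 (e - 1) (by omega) (by omega) h
    omega
  obtain ⟨u, hu, v, hv, huv⟩ := exists_smul_eps_sub_eps_eq_sub hconst hR
  refine ⟨fun i j hi hj => (hconst i hi).trans (hconst j hj).symm, mem_neg_RstarSet ?_⟩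
  refine smul_eps_sub_eps_mem_Rset_diff hJp.isBlockPartition hJm.isBlockPartition
    (hsign 0 (by omega)).1 hends hu hv huv ?_
  rintro ⟨⟨Ip, hIp, h₁, h₂⟩, ⟨Im, hIm, h₃, h₄⟩⟩
  exact hnocommon ⟨Ip, hIp, Im, hIm, h₁, h₃, h₂, h₄⟩

/-- Corollary 3.8.4: for an edge with all `ε_i β_i ∈ R` and no internal turning point, whose
end-points do not lie in a common double component, all `ε_i` coincide and
`ε_1(ε_{x_1} − ε_{x_e}) ∈ −R_*`. -/
theorem statement_12 (n : ℕ) (hn : 2 ≤ n)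
    (Jp Jm : Set (Set (Fin n)))
    (hJp : IsIntervalPartitionF n Jp) (hJm : IsIntervalPartitionF n Jm)
    (hU : piOf n Jp ∪ piOf n Jm = simpleRoots n)
    (σp σm : Fin n → Fin n)
    (hσp : ∀ t, σp (σp t) = t) (hσm : ∀ t, σm (σm t) = t)
    (e : ℕ) (x : ℕ → Fin n) (τ : ℕ → Bool)
    (hedge : IsEdge e σp σm x τ)
    (εf : ℕ → ℤ) (hsign : SignConv e x τ εf)
    (hR : ∀ i, i + 1 < e →
      (εf i : ℝ) • (eps n (x i) - eps n (x (i + 1))) ∈ Rset n (piOf n Jp) (piOf n Jm))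
    (hnoturn : ∀ i, ¬ InternalTP e x i)
    (hnocommon : ¬ ∃ Ip ∈ Jp, ∃ Im ∈ Jm,
      x 0 ∈ Ip ∧ x 0 ∈ Im ∧ x (e - 1) ∈ Ip ∧ x (e - 1) ∈ Im) :
    (∀ i j, i + 1 < e → j + 1 < e → εf i = εf j) ∧
    (εf 0 : ℝ) • (eps n (x 0) - eps n (x (e - 1)))
      ∈ -RstarSet n (piOf n Jp) (piOf n Jm) :=
  statement_12_general n Jp Jm hJp hJm σp σm e x τ hedge εf hsign hR hnoturn hnocommon
end

section
/- Let 𝒥⁺, 𝒥⁻ be partitions of [1,n] into intervals. Let J_1⁺, J_2⁺ ∈ 𝒥⁺ and J_1⁻, J_2⁻ ∈ 𝒥⁻ with J_1⁺ ∩ J_1⁻ ≠ ∅ and J_2⁺ ∩ J_2⁻ ≠ ∅ defining distinct double components (i.e. J_1⁺ ≠ J_2⁺ or J_1⁻ ≠ J_2⁻). Suppose centre(J_1⁺) ≤ centre(J_1⁻) and centre(J_2⁺) ≥ centre(J_2⁻). Then for every b ∈ J_1⁺ ∩ J_1⁻ and every a ∈ J_2⁺ ∩ J_2⁻ one has ε_b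 − ε_a ∈ K. (Lemma 9.5, with the sink/source conditions on the end-points of straightened edges expressed by the centre inequalities; this is also the key case in the proofs of Lemmas 4.3.1 and 9.6.) -/
open Pointwise

/-!
The sums `∑_{k < t} x k` are nonnegative and the sums of `x` over a component of `𝒥` vanish on
every generator of `ℕπ`, hence on all of `ℕπ`. So `ε_b - ε_a ∈ ℕπ⁺` forces `b < a` with `b` and
`a` in the same component of `𝒥⁺`. Then `J₁⁺ = J₂⁺`, so `J₁⁻ ≠ J₂⁻` are disjoint, and `b < a`
puts `J₁⁻` to the left of `J₂⁻`:
`centre J₁⁻ < centre J₂⁻ ≤ centre J₂⁺ = centre J₁⁺ ≤ centre J₁⁻`.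
The case `ε_b - ε_a ∈ -ℕπ⁻` is symmetric.
-/

open Set

noncomputable def sumOver {n : ℕ} (s : Set (Fin n)) : (Fin n → ℝ) →+ ℝ := by
  classical exact ∑ k ∈ Finset.univ.filter (· ∈ s), Pi.evalAddMonoidHom (fun _ => ℝ) k

lemma sumOver_eps_sub_eps {n : ℕ} (s : Set (Fin n)) (i j : Fin n) :
    sumOver s (eps n i - eps n j) = s.indicator 1 i - s.indicator 1 j := by
  classical
  simp [sumOver, eps, Finset.sum_pi_single', indicator_apply]

lemma sumOver_nonneg_of_mem_Nspan {n : ℕ} {S : Set (Fin n → ℝ)} {s : Set (Fin n)}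
    (hS : ∀ v ∈ S, 0 ≤ sumOver s v) {x : Fin n → ℝ} (hx : x ∈ Nspan S) : 0 ≤ sumOver s x :=
  AddSubmonoid.closure_le (S := (AddSubmonoid.nonneg ℝ).comap (sumOver s)) |>.2 hS hx

lemma sumOver_eq_zero_of_mem_Nspan {n : ℕ} {S : Set (Fin n → ℝ)} {s : Set (Fin n)}
    (hS : ∀ v ∈ S, sumOver s v = 0) {x : Fin n → ℝ} (hx : x ∈ Nspan S) : sumOver s x = 0 :=
  AddSubmonoid.closure_le (S := AddMonoidHom.mker (sumOver s)) |>.2 hS hx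

lemma sumOver_Iio_nonneg_of_mem_Nspan_simpleRoots {n : ℕ} (t : Fin n) {x : Fin n → ℝ}
    (hx : x ∈ Nspan (simpleRoots n)) : 0 ≤ sumOver (Iio t) x := by
  refine sumOver_nonneg_of_mem_Nspan ?_ hx
  rintro _ ⟨i, j, hij, rfl⟩
  rw [sumOver_eps_sub_eps]
  by_cases hj : j < t
  · simp [hj, show i < t from lt_trans (Fin.lt_def.2 (by omega)) hj]
  · by_cases hi : i < t <;> simp [hi, hj]

lemma Nspan_piOf_subset_Nspan_simpleRoots {n : ℕ} (J : Set (Set (Fin n))) :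
    Nspan (piOf n J) ⊆ Nspan (simpleRoots n) :=
  AddSubmonoid.closure_mono fun _ ⟨i, j, hij, hv, _⟩ ↦ ⟨i, j, hij, hv⟩

lemma sumOver_eq_zero_of_mem_Nspan_piOf {n : ℕ} {J : Set (Set (Fin n))} (hJ : J.Pairwise Disjoint)
    {I : Set (Fin n)} (hI : I ∈ J) {x : Fin n → ℝ} (hx : x ∈ Nspan (piOf n J)) :
    sumOver I x = 0 := by
  refine sumOver_eq_zero_of_mem_Nspan ?_ hx
  rintro _ ⟨i, j, -, rfl, I', hI', hi, hj⟩
  rw [sumOver_eps_sub_eps]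
  obtain rfl | hII' := eq_or_ne I I'
  · simp [hi, hj]
  · have hd := disjoint_left.1 (hJ hI hI' hII').symm
    simp [hd hi, hd hj]

lemma lt_and_mem_of_eps_sub_eps_mem_Nspan_piOf {n : ℕ} {J : Set (Set (Fin n))}
    (hJ : J.Pairwise Disjoint) {I : Set (Fin n)} (hI : I ∈ J) {b a : Fin n} (hb : b ∈ I)
    (hne : b ≠ a) (h : eps n b - eps n a ∈ Nspan (piOf n J)) : b < a ∧ a ∈ I := by
  constructor
  · by_contra! hab
    have := sumOver_Iio_nonneg_of_mem_Nspan_simpleRoots b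
      (Nspan_piOf_subset_Nspan_simpleRoots J h)
    rw [sumOver_eps_sub_eps] at this
    norm_num [lt_of_le_of_ne hab hne.symm] at this
  · by_contra ha
    have := sumOver_eq_zero_of_mem_Nspan_piOf hJ hI h
    simp [sumOver_eps_sub_eps, hb, ha] at this

lemma lt_of_disjoint_Icc {α : Type*} [LinearOrder α] {a b c d x y : α}
    (hd : Disjoint (Icc a b) (Icc c d)) (hx : x ∈ Icc a b) (hy : y ∈ Icc c d) (hxy : x < y) :
    b < c := by
  by_contra! hcb
  have hz : max x c ∈ Icc a b := ⟨le_max_of_le_left hx.1, max_le hx.2 hcb⟩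
  exact disjoint_left.1 hd hz ⟨le_max_right x c, max_le hxy.le hy.1 |>.trans hy.2⟩

lemma val_add_val_lt_of_disjoint_Icc {n : ℕ} {a b c d x y : Fin n}
    (hd : Disjoint (Icc a b) (Icc c d)) (hx : x ∈ Icc a b) (hy : y ∈ Icc c d) (hxy : x < y) :
    (a : ℕ) + b < c + d := by
  have hbc := lt_of_disjoint_Icc hd hx hy hxy
  have hab := hx.1.trans hx.2
  have hcd := hy.1.trans hy.2
  rw [Fin.lt_def] at hbc; rw [Fin.le_def] at hab hcd
  omega

theorem statement_13_general (n : ℕ)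
    (Jp Jm : Set (Set (Fin n)))
    (hJp : IsIntervalPartitionF n Jp) (hJm : IsIntervalPartitionF n Jm)
    (a1p b1p a2p b2p a1m b1m a2m b2m : Fin n)
    (h1p : Set.Icc a1p b1p ∈ Jp) (h2p : Set.Icc a2p b2p ∈ Jp)
    (h1m : Set.Icc a1m b1m ∈ Jm) (h2m : Set.Icc a2m b2m ∈ Jm)
    (hdist : Set.Icc a1p b1p ≠ Set.Icc a2p b2p ∨ Set.Icc a1m b1m ≠ Set.Icc a2m b2m)
    (hc1 : (a1p : ℕ) + (b1p : ℕ) ≤ (a1m : ℕ) + (b1m : ℕ))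
    (hc2 : (a2m : ℕ) + (b2m : ℕ) ≤ (a2p : ℕ) + (b2p : ℕ)) :
    ∀ b ∈ Set.Icc a1p b1p ∩ Set.Icc a1m b1m,
    ∀ a ∈ Set.Icc a2p b2p ∩ Set.Icc a2m b2m,
      eps n b - eps n a ∈ Kset n (piOf n Jp) (piOf n Jm) := by
  rintro b ⟨hbp, hbm⟩ a ⟨hap, ham⟩
  have hJp : Jp.Pairwise Disjoint := hJp.2.2
  have hJm : Jm.Pairwise Disjoint := hJm.2.2
  have hba : b ≠ a := by
    rintro rfl
    exact hdist.elim (· (hJp.eq h1p h2p (not_disjoint_iff.2 ⟨b, hbp, hap⟩)))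
      (· (hJm.eq h1m h2m (not_disjoint_iff.2 ⟨b, hbm, ham⟩)))
  refine ⟨⟨b, a, hba, rfl⟩, ?_⟩
  rintro ⟨hplus | hminus, -⟩
  · obtain ⟨hlt, hap'⟩ := lt_and_mem_of_eps_sub_eps_mem_Nspan_piOf hJp h1p hbp hba hplus
    have hp := hJp.eq h1p h2p (not_disjoint_iff.2 ⟨a, hap', hap⟩)
    have hm := hdist.resolve_left (not_not.2 hp)
    have := val_add_val_lt_of_disjoint_Icc (hJm h1m h2m hm) hbm ham hlt
    obtain ⟨rfl, rfl⟩ := (Icc_eq_Icc_iff (nonempty_Icc.1 ⟨b, hbp⟩)).1 hp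
    omega
  · have hminus : eps n a - eps n b ∈ Nspan (piOf n Jm) := by simpa using hminus
    obtain ⟨hlt, hbm'⟩ := lt_and_mem_of_eps_sub_eps_mem_Nspan_piOf hJm h2m ham hba.symm hminus
    have hm := hJm.eq h1m h2m (not_disjoint_iff.2 ⟨b, hbm, hbm'⟩)
    have hp := hdist.resolve_right (not_not.2 hm)
    have := val_add_val_lt_of_disjoint_Icc (hJp h2p h1p (Ne.symm hp)) hap hbp hlt
    obtain ⟨rfl, rfl⟩ := (Icc_eq_Icc_iff (nonempty_Icc.1 ⟨b, hbm⟩)).1 hm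
    omega

/-- Lemma 9.5: if `b` lies in a double component `J₁⁺ ∩ J₁⁻` with `centre(J₁⁺) ≤ centre(J₁⁻)`,
`a` lies in a distinct double component `J₂⁺ ∩ J₂⁻` with `centre(J₂⁺) ≥ centre(J₂⁻)`, then
`ε_b − ε_a ∈ K`. Centres are compared via the sums of end-points. -/
theorem statement_13 (n : ℕ) (hn : 2 ≤ n)
    (Jp Jm : Set (Set (Fin n)))
    (hJp : IsIntervalPartitionF n Jp) (hJm : IsIntervalPartitionF n Jm)
    (a1p b1p a2p b2p a1m b1m a2m b2m : Fin n)
    (h1p : Set.Icc a1p b1p ∈ Jp) (h2p : Set.Icc a2p b2p ∈ Jp)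
    (h1m : Set.Icc a1m b1m ∈ Jm) (h2m : Set.Icc a2m b2m ∈ Jm)
    (h1a : a1p ≤ b1p) (h2a : a2p ≤ b2p) (h1b : a1m ≤ b1m) (h2b : a2m ≤ b2m)
    (h1ne : (Set.Icc a1p b1p ∩ Set.Icc a1m b1m).Nonempty)
    (h2ne : (Set.Icc a2p b2p ∩ Set.Icc a2m b2m).Nonempty)
    (hdist : Set.Icc a1p b1p ≠ Set.Icc a2p b2p ∨ Set.Icc a1m b1m ≠ Set.Icc a2m b2m)
    (hc1 : (a1p : ℕ) + (b1p : ℕ) ≤ (a1m : ℕ) + (b1m : ℕ))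
    (hc2 : (a2m : ℕ) + (b2m : ℕ) ≤ (a2p : ℕ) + (b2p : ℕ)) :
    ∀ b ∈ Set.Icc a1p b1p ∩ Set.Icc a1m b1m,
    ∀ a ∈ Set.Icc a2p b2p ∩ Set.Icc a2m b2m,
      eps n b - eps n a ∈ Kset n (piOf n Jp) (piOf n Jm) :=
  statement_13_general n Jp Jm hJp hJm a1p b1p a2p b2p a1m b1m a2m b2m h1p h2p h1m h2m hdist hc1 hc2
end

section
/- Let 𝒥⁺, 𝒥⁻ be partitions of [1,n] into intervals with π⁺ ∪ π⁻ = π, and let σ⁺ (resp. σ⁻) be an involution of [1,n] mapping each component of 𝒥⁺ (resp. of 𝒥⁻) to itself. Let (x_1,…,x_e; τ) be an edge for (σ⁺,σ⁻) with ε_i β_i ∈ R for all i. Let 1 < t < e be such that x_t is an internal turning point, let t₋ be the largest index < t and t₊ the smallest index > t such that x_{t₋}, x_{t₊} are turning points, and set β₋ = β_{t−1}, β₊ = β_t, ε₋ = ε_{t−1}, ε₊ = ε_t, ι₋ = β_{t₋} + β_{t₋+1} + … + β_{t−1}, ι₊ = β_t + β_{t+1} + … + β_{t₊−1}. Suppose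 that β₋ and β₊ are both nil, i.e. β₋ ∈ K ∪ (−K) and β₊ ∈ K ∪ (−K). Then ε₋(β₋ + ι₊) ∈ K and ε₊(β₊ + ι₋) ∈ K. (Lemma 5.4.) -/
open Pointwise

/-!
Say `x (t-1) < x t < x (t+1)` and let `J` be the partition labelling the step `t - 1 → t`; as
labels alternate, it also labels the steps leaving `x (t+1)`, `x (t+3)`, …. The points strictly
between `t` and `tp` are strict local extrema, so after `x t` the edge zigzags, first up, and its
descending steps are exactly the `J`-steps. Nilness of `β₊` puts `x t` and `x (t+1)` in different
`J`-components, so the first step leaves the `J`-component `C` of `x (t-1)` upwards; as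
components are intervals, a descending step inside a `J`-component can never reach `C` again.
Hence `C` lies below `x tp`: `ε₋(β₋ + ι₊) = ε₋(ε_{x (t-1)} - ε_{x tp})` has the sign of `ε₋β₋`,
and `x (t-1)`, `x tp` lie in different `J`-components, which for a root of that sign means
precisely that it is not in `R`. The second claim is the same argument read backwards.
-/

section
variable {α : Type*} [LinearOrder α]

def IsStrictExtremum (a b c : α) : Prop := (a < b ∧ c < b) ∨ (b < a ∧ b < c)

theorem IsStrictExtremum.symm {a b c : α} (h : IsStrictExtremum a b c) :
    IsStrictExtremum c b a := by
  unfold IsStrictExtremum at *; tauto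

theorem IsStrictExtremum.dual {a b c : α} (h : IsStrictExtremum a b c) :
    IsStrictExtremum (OrderDual.toDual a) (OrderDual.toDual b) (OrderDual.toDual c) :=
  Or.symm h

theorem IsStrictExtremum.lt_iff_not_lt {a b c : α} (h : IsStrictExtremum a b c) :
    b < c ↔ ¬ a < b := by
  rcases h with ⟨h₁, h₂⟩ | ⟨h₁, h₂⟩
  · exact iff_of_false h₂.not_gt (not_not.mpr h₁)
  · exact iff_of_true h₂ h₁.not_gt

theorem iff_of_alternating {P Q : ℕ → Prop} {m : ℕ} (h₀ : P 0 ↔ Q 0)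
    (hP : ∀ k, k + 1 < m → (P (k + 1) ↔ ¬ P k)) (hQ : ∀ k, k + 1 < m → (Q (k + 1) ↔ ¬ Q k)) :
    ∀ k < m, P k ↔ Q k := by
  intro k hk
  induction k with
  | zero => exact h₀
  | succ k ih => rw [hP k hk, hQ k hk, ih (by omega)]

/-- If a descending step inside a class jumped below some `z` in the class of `y 0`, the
order-connected class of its lower end would contain `z` and its upper end, merging the two. -/
theorem lt_of_rel_of_forall_lt_or_rel {S : α → α → Prop} (hS : Equivalence S)
    (hconv : ∀ a, {b | S a b}.OrdConnected) {y : ℕ → α} (h₀₁ : y 0 < y 1)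
    (hS₀₁ : ¬ S (y 0) (y 1)) {m : ℕ} (hm : 1 ≤ m)
    (hstep : ∀ k, 1 ≤ k → k < m → y k < y (k + 1) ∨ S (y k) (y (k + 1))) :
    ∀ z, S (y 0) z → z < y m := by
  induction m, hm using Nat.le_induction with
  | base =>
    intro z hz
    by_contra! h
    exact hS₀₁ ((hconv (y 0)).out (hS.refl _) hz ⟨h₀₁.le, h⟩)
  | succ m hm ih =>
    have ih := ih fun k h₁ h₂ => hstep k h₁ (by omega)
    intro z hz
    rcases hstep m hm (by omega) with hup | hrel
    · exact (ih z hz).trans hup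
    · by_contra! h
      have hz' : S (y (m + 1)) z :=
        (hconv _).out (hS.refl _) (hS.symm hrel) ⟨h, (ih z hz).le⟩
      exact (ih (y m) (hS.trans hz (hS.trans (hS.symm hz') (hS.symm hrel)))).false

variable {S : Bool → α → α → Prop} {y : ℕ → α} {lab : ℕ → Bool} {m : ℕ}

theorem lt_of_rel_of_zigzag (hS : ∀ s, Equivalence (S s))
    (hconv : ∀ s a, {b | S s a b}.OrdConnected) (hm : 1 ≤ m)
    (hlab : ∀ k, k + 1 < m → lab (k + 1) = !lab k)
    (hstep : ∀ k < m, S (lab k) (y k) (y (k + 1)))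
    (hext : ∀ k, k + 1 < m → IsStrictExtremum (y k) (y (k + 1)) (y (k + 2)))
    (hS₀₁ : ¬ S (!lab 0) (y 0) (y 1)) (h₀₁ : y 0 < y 1) :
    ∀ z, S (!lab 0) (y 0) z → z < y m := by
  have hsync : ∀ k < m, y k < y (k + 1) ↔ lab k = lab 0 :=
    iff_of_alternating (iff_of_true h₀₁ rfl) (fun k hk => (hext k hk).lt_iff_not_lt)
      (fun k hk => by rw [hlab k hk]; cases lab k <;> cases lab 0 <;> decide)
  refine lt_of_rel_of_forall_lt_or_rel (hS _) (hconv _) h₀₁ hS₀₁ hm fun k _ hk => ?_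
  by_cases h : lab k = lab 0
  · exact Or.inl ((hsync k hk).mpr h)
  · right
    simpa [Bool.eq_not_iff.mpr h] using hstep k hk

theorem gt_of_rel_of_zigzag (hS : ∀ s, Equivalence (S s))
    (hconv : ∀ s a, {b | S s a b}.OrdConnected) (hm : 1 ≤ m)
    (hlab : ∀ k, k + 1 < m → lab (k + 1) = !lab k)
    (hstep : ∀ k < m, S (lab k) (y k) (y (k + 1)))
    (hext : ∀ k, k + 1 < m → IsStrictExtremum (y k) (y (k + 1)) (y (k + 2)))
    (hS₀₁ : ¬ S (!lab 0) (y 0) (y 1)) (h₁₀ : y 1 < y 0) :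
    ∀ z, S (!lab 0) (y 0) z → y m < z :=
  lt_of_rel_of_zigzag (α := αᵒᵈ) (y := fun k => OrderDual.toDual (y k)) hS
    (fun s a => (hconv s a).dual) hm hlab hstep (fun k hk => (hext k hk).dual) hS₀₁ h₁₀

theorem not_rel_and_lt_iff_of_zigzag (hS : ∀ s, Equivalence (S s))
    (hconv : ∀ s a, {b | S s a b}.OrdConnected) (hm : 1 ≤ m)
    (hlab : ∀ k, k + 1 < m → lab (k + 1) = !lab k)
    (hstep : ∀ k < m, S (lab k) (y k) (y (k + 1)))
    (hext : ∀ k, k + 1 < m → IsStrictExtremum (y k) (y (k + 1)) (y (k + 2)))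
    (hS₀₁ : ¬ S (!lab 0) (y 0) (y 1)) {p : α} (hp : S (!lab 0) (y 0) p)
    (hmono : (p < y 0 ∧ y 0 < y 1) ∨ (y 1 < y 0 ∧ y 0 < p)) :
    ¬ S (!lab 0) p (y m) ∧ (p < y 0 ↔ p < y m) := by
  rcases hmono with ⟨hp₀, h₀₁⟩ | ⟨h₁₀, hp₀⟩
  · have hlt := lt_of_rel_of_zigzag hS hconv hm hlab hstep hext hS₀₁ h₀₁
    exact ⟨fun h => (hlt _ ((hS _).trans hp h)).false, iff_of_true hp₀ (hlt p hp)⟩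
  · have hgt := gt_of_rel_of_zigzag hS hconv hm hlab hstep hext hS₀₁ h₁₀
    exact ⟨fun h => (hgt _ ((hS _).trans hp h)).false,
      iff_of_false hp₀.not_gt (hgt p hp).not_gt⟩

end

theorem sum_Ico_sub_succ {M : Type*} [AddCommGroup M] (f : ℕ → M) {a b : ℕ} (hab : a ≤ b) :
    ∑ i ∈ Finset.Ico a b, (f i - f (i + 1)) = f a - f b := by
  rw [← neg_sub (f b), ← Finset.sum_Ico_sub f hab, ← Finset.sum_neg_distrib]
  simp only [neg_sub]

def SameComponent {α : Type*} (J : Set (Set α)) (a b : α) : Prop := ∃ I ∈ J, a ∈ I ∧ b ∈ I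

theorem SameComponent.symm {α : Type*} {J : Set (Set α)} {a b : α} (h : SameComponent J a b) :
    SameComponent J b a :=
  let ⟨I, hI, ha, hb⟩ := h; ⟨I, hI, hb, ha⟩

section
variable {n : ℕ}

theorem dotProduct_eps (w : Fin n → ℝ) (i : Fin n) : w ⬝ᵥ eps n i = w i := by
  rw [eps, dotProduct_single, mul_one]

theorem dotProduct_eps_sub (w : Fin n → ℝ) (i j : Fin n) :
    w ⬝ᵥ (eps n i - eps n j) = w i - w j := by
  rw [dotProduct_sub, dotProduct_eps, dotProduct_eps]

theorem dotProduct_nonpos_of_mem_Nspan {S : Set (Fin n → ℝ)} {w v : Fin n → ℝ}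
    (hS : ∀ s ∈ S, w ⬝ᵥ s ≤ 0) (hv : v ∈ Nspan S) : w ⬝ᵥ v ≤ 0 := by
  induction hv using AddSubmonoid.closure_induction with
  | mem s hs => exact hS s hs
  | zero => simp
  | add a b _ _ ha hb => rw [dotProduct_add]; linarith

theorem eps_sub_mem_DeltaPos_iff {i j : Fin n} : eps n i - eps n j ∈ DeltaPos n ↔ i < j := by
  refine ⟨fun ⟨k, l, hkl, h⟩ => ?_, fun h => ⟨i, j, h, rfl⟩⟩
  have := congrArg (fun v => (fun m : Fin n => ((m : ℕ) : ℝ)) ⬝ᵥ v) h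
  simp only [dotProduct_eps_sub] at this
  have : ((k : ℕ) : ℝ) < l := by exact_mod_cast hkl
  exact Fin.lt_def.mpr (by exact_mod_cast (by linarith : ((i : ℕ) : ℝ) < j))

theorem eps_sub_mem_DeltaNeg_iff {i j : Fin n} : eps n i - eps n j ∈ DeltaNeg n ↔ j < i := by
  rw [DeltaNeg, Set.mem_neg, neg_sub, eps_sub_mem_DeltaPos_iff]

namespace IsIntervalPartitionF

variable {J : Set (Set (Fin n))}

theorem exists_mem (hJ : IsIntervalPartitionF n J) (a : Fin n) : ∃ I ∈ J, a ∈ I :=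
  Set.mem_sUnion.mp (hJ.2.1 ▸ Set.mem_univ a)

theorem eq_of_mem (hJ : IsIntervalPartitionF n J) {I I' : Set (Fin n)} (hI : I ∈ J)
    (hI' : I' ∈ J) {a : Fin n} (ha : a ∈ I) (ha' : a ∈ I') : I = I' := by
  by_contra h
  exact Set.disjoint_left.mp (hJ.2.2 I hI I' hI' h) ha ha'

theorem sameComponent_iff (hJ : IsIntervalPartitionF n J) {I : Set (Fin n)} (hI : I ∈ J)
    {a b : Fin n} (ha : a ∈ I) : SameComponent J a b ↔ b ∈ I :=
  ⟨fun ⟨_, hI', ha', hb⟩ => hJ.eq_of_mem hI' hI ha' ha ▸ hb, fun hb => ⟨I, hI, ha, hb⟩⟩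

theorem sameComponent_equivalence (hJ : IsIntervalPartitionF n J) :
    Equivalence (SameComponent J) where
  refl a := let ⟨I, hI, ha⟩ := hJ.exists_mem a; ⟨I, hI, ha, ha⟩
  symm := SameComponent.symm
  trans := fun ⟨I, hI, ha, hb⟩ hbc => ⟨I, hI, ha, (hJ.sameComponent_iff hI hb).mp hbc⟩

theorem ordConnected_sameComponent (hJ : IsIntervalPartitionF n J) (a : Fin n) :
    {b | SameComponent J a b}.OrdConnected := by
  obtain ⟨I, hI, ha⟩ := hJ.exists_mem a
  rw [show {b | SameComponent J a b} = I from Set.ext fun b => hJ.sameComponent_iff hI ha]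
  obtain ⟨c, d, -, rfl⟩ := hJ.1 I hI
  exact Set.ordConnected_Icc

theorem sameComponent_apply (hJ : IsIntervalPartitionF n J) {σ : Fin n → Fin n}
    (hσ : ∀ I ∈ J, ∀ a ∈ I, σ a ∈ I) (a : Fin n) : SameComponent J a (σ a) :=
  let ⟨I, hI, ha⟩ := hJ.exists_mem a; ⟨I, hI, ha, hσ I hI a ha⟩

theorem ite {Jp Jm : Set (Set (Fin n))} (hJp : IsIntervalPartitionF n Jp)
    (hJm : IsIntervalPartitionF n Jm) (s : Bool) :
    IsIntervalPartitionF n (if s then Jp else Jm) := by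
  cases s <;> assumption

theorem eps_sub_mem_Nspan_piOf (hJ : IsIntervalPartitionF n J) {i j : Fin n}
    (hij : i ≤ j) (h : SameComponent J i j) : eps n i - eps n j ∈ Nspan (piOf n J) := by
  obtain ⟨I, hI, hi, hj⟩ := h
  obtain ⟨a, b, -, rfl⟩ := hJ.1 I hI
  suffices ∀ m, (i : ℕ) ≤ m → ∀ hm : m < n, ⟨m, hm⟩ ∈ Set.Icc a b →
      eps n i - eps n ⟨m, hm⟩ ∈ Nspan (piOf n J) from this j hij j.2 hj
  intro m him
  induction m, him using Nat.le_induction with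
  | base => intro _ _; simp [Nspan, zero_mem]
  | succ m him ih =>
    intro hm hmem
    have hmem' : (⟨m, by omega⟩ : Fin n) ∈ Set.Icc a b :=
      ⟨hi.1.trans him, (Fin.mk_le_mk.mpr m.le_succ).trans hmem.2⟩
    rw [← sub_add_sub_cancel _ (eps n ⟨m, by omega⟩)]
    exact add_mem (ih _ hmem') (AddSubmonoid.subset_closure ⟨_, _, rfl, rfl, _, hI, hmem', hmem⟩)

/-- The height `∑ k • v k` is negative on simple roots, and the sum of the coordinates over a
component vanishes on the simple roots of `J`. -/
theorem lt_and_sameComponent_of_mem_Nspan_piOf (hJ : IsIntervalPartitionF n J) {i j : Fin n}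
    (hij : i ≠ j) (h : eps n i - eps n j ∈ Nspan (piOf n J)) : i < j ∧ SameComponent J i j := by
  constructor
  · have := dotProduct_nonpos_of_mem_Nspan (w := fun k => ((k : ℕ) : ℝ)) ?_ h
    · rw [dotProduct_eps_sub, sub_nonpos] at this
      exact lt_of_le_of_ne (Fin.le_def.mpr (by exact_mod_cast this)) hij
    · rintro _ ⟨k, l, hl, rfl, -⟩
      rw [dotProduct_eps_sub, hl]
      push_cast
      linarith
  · obtain ⟨I, hI, hi⟩ := hJ.exists_mem i
    refine (hJ.sameComponent_iff hI hi).mpr (by_contra fun hj => ?_)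
    have := dotProduct_nonpos_of_mem_Nspan (w := I.indicator 1) ?_ h
    · rw [dotProduct_eps_sub, Set.indicator_of_mem hi, Set.indicator_of_notMem hj] at this
      norm_num at this
    · rintro _ ⟨k, l, -, rfl, I', hI', hk, hl⟩
      rw [dotProduct_eps_sub]
      by_cases hkI : k ∈ I
      · have hlI : l ∈ I := hJ.eq_of_mem hI' hI hk hkI ▸ hl
        simp [Set.indicator_of_mem hkI, Set.indicator_of_mem hlI]
      · have hlI : l ∉ I := fun hlI => hkI (hJ.eq_of_mem hI' hI hl hlI ▸ hk)
        simp [Set.indicator_of_notMem hkI, Set.indicator_of_notMem hlI]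

theorem eps_sub_mem_Nspan_piOf_iff (hJ : IsIntervalPartitionF n J) {i j : Fin n}
    (hij : i ≠ j) : eps n i - eps n j ∈ Nspan (piOf n J) ↔ i < j ∧ SameComponent J i j :=
  ⟨hJ.lt_and_sameComponent_of_mem_Nspan_piOf hij,
    fun ⟨hlt, h⟩ => hJ.eps_sub_mem_Nspan_piOf hlt.le h⟩

end IsIntervalPartitionF

variable {Jp Jm : Set (Set (Fin n))}

theorem eps_sub_mem_Rset_iff (hJp : IsIntervalPartitionF n Jp) (hJm : IsIntervalPartitionF n Jm)
    {i j : Fin n} (hij : i ≠ j) :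
    eps n i - eps n j ∈ Rset n (piOf n Jp) (piOf n Jm) ↔
      (i < j ∧ SameComponent Jp i j) ∨ (j < i ∧ SameComponent Jm i j) := by
  rw [Rset, Set.mem_inter_iff, Set.mem_union, Set.mem_neg, neg_sub,
    hJp.eps_sub_mem_Nspan_piOf_iff hij, hJm.eps_sub_mem_Nspan_piOf_iff hij.symm]
  exact ⟨fun h => h.1.imp_right fun h => ⟨h.1, h.2.symm⟩,
    fun h => ⟨h.imp_right fun h => ⟨h.1, h.2.symm⟩, i, j, hij, rfl⟩⟩

theorem eps_sub_mem_Kset_iff (hJp : IsIntervalPartitionF n Jp) (hJm : IsIntervalPartitionF n Jm)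
    {i j : Fin n} (hij : i ≠ j) :
    eps n i - eps n j ∈ Kset n (piOf n Jp) (piOf n Jm) ↔
      ¬ ((i < j ∧ SameComponent Jp i j) ∨ (j < i ∧ SameComponent Jm i j)) := by
  rw [Kset, Set.mem_sdiff, eps_sub_mem_Rset_iff hJp hJm hij]
  exact and_iff_right ⟨i, j, hij, rfl⟩

theorem not_sameComponent_of_mem_Kset_union_neg (hJp : IsIntervalPartitionF n Jp)
    (hJm : IsIntervalPartitionF n Jm) {a b : Fin n} (hab : a ≠ b)
    (hnil : eps n a - eps n b ∈ Kset n (piOf n Jp) (piOf n Jm) ∪ -Kset n (piOf n Jp) (piOf n Jm))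
    {s : Bool} (h : SameComponent (if s then Jp else Jm) a b) :
    ¬ SameComponent (if !s then Jp else Jm) a b := by
  intro h'
  have hboth : SameComponent Jp a b ∧ SameComponent Jm a b := by
    cases s
    · exact ⟨h', h⟩
    · exact ⟨h, h'⟩
  rw [Set.mem_union, Set.mem_neg, neg_sub, eps_sub_mem_Kset_iff hJp hJm hab,
    eps_sub_mem_Kset_iff hJp hJm hab.symm] at hnil
  rcases hab.lt_or_gt with hlt | hlt
  · exact hnil.elim (· (Or.inl ⟨hlt, hboth.1⟩)) (· (Or.inr ⟨hlt, hboth.2.symm⟩))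
  · exact hnil.elim (· (Or.inr ⟨hlt, hboth.2⟩)) (· (Or.inl ⟨hlt, hboth.1.symm⟩))

theorem smul_eps_sub_eps_mem_Kset (hJp : IsIntervalPartitionF n Jp)
    (hJm : IsIntervalPartitionF n Jm) {c : ℤ} (hc : c = 1 ∨ c = -1) {a b d : Fin n}
    (hside : a < b ↔ a < d) {s : Bool}
    (hpos : s = true → (c : ℝ) • (eps n a - eps n b) ∈ DeltaPos n)
    (hneg : s = false → (c : ℝ) • (eps n a - eps n b) ∈ DeltaNeg n)
    (hsep : ¬ SameComponent (if s then Jp else Jm) a d) :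
    (c : ℝ) • (eps n a - eps n d) ∈ Kset n (piOf n Jp) (piOf n Jm) := by
  have had : a ≠ d := fun h => hsep (h ▸ (hJp.ite hJm s).sameComponent_equivalence.refl a)
  rcases hc with rfl | rfl <;> cases s <;>
    simp only [Int.cast_one, one_smul, Int.cast_neg, neg_smul, neg_sub, Bool.false_eq_true,
      if_true, if_false, forall_const, eps_sub_mem_DeltaPos_iff, eps_sub_mem_DeltaNeg_iff,
      eps_sub_mem_Kset_iff hJp hJm had, eps_sub_mem_Kset_iff hJp hJm had.symm,
      reduceCtorEq, IsEmpty.forall_iff] at hpos hneg hsep ⊢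
  all_goals rintro (⟨h₁, h₂⟩ | ⟨h₁, h₂⟩) <;> first | exact hsep h₂ | exact hsep h₂.symm | grind

theorem smul_eps_sub_eps_mem_Kset' (hJp : IsIntervalPartitionF n Jp)
    (hJm : IsIntervalPartitionF n Jm) {c : ℤ} (hc : c = 1 ∨ c = -1) {a b d : Fin n}
    (hside : a < b ↔ a < d) {s : Bool}
    (hpos : s = true → (c : ℝ) • (eps n b - eps n a) ∈ DeltaPos n)
    (hneg : s = false → (c : ℝ) • (eps n b - eps n a) ∈ DeltaNeg n)
    (hsep : ¬ SameComponent (if s then Jp else Jm) a d) :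
    (c : ℝ) • (eps n d - eps n a) ∈ Kset n (piOf n Jp) (piOf n Jm) := by
  have hneg_smul (v w : Fin n → ℝ) : (c : ℝ) • (v - w) = ((-c : ℤ) : ℝ) • (w - v) := by
    rw [Int.cast_neg, neg_smul, ← smul_neg, neg_sub]
  rw [hneg_smul] at hpos hneg ⊢
  exact smul_eps_sub_eps_mem_Kset hJp hJm (by omega) hside hpos hneg hsep

variable {e : ℕ} {x : ℕ → Fin n} {σp σm : Fin n → Fin n} {τ : ℕ → Bool}

theorem InternalTP.lt_lt_or_gt_gt {t : ℕ} (ht : InternalTP e x t) :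
    (x (t - 1) < x t ∧ x t < x (t + 1)) ∨ (x (t + 1) < x t ∧ x t < x (t - 1)) := by
  have := mul_neg_iff.mp ht.2.2
  simp only [Fin.lt_def]
  omega

theorem IsEdge.lt_of_turningPt (hedge : IsEdge e σp σm x τ) {u : ℕ} (hu : TurningPt e x u) :
    u < e := by
  have := hedge.1
  rcases hu with hu | hu | hu
  · omega
  · omega
  · have := hu.2.1; omega

theorem IsEdge.isStrictExtremum (hedge : IsEdge e σp σm x τ) {u : ℕ} (hu : u + 2 < e)
    (hnt : ¬ TurningPt e x (u + 1)) : IsStrictExtremum (x u) (x (u + 1)) (x (u + 2)) := by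
  have h₁ := Fin.val_ne_of_ne (hedge.2.2.2.1 u (by omega)).2
  have h₂ : (x (u + 2) : ℕ) ≠ x (u + 1) := Fin.val_ne_of_ne (hedge.2.2.2.1 (u + 1) hu).2
  have hprod := fun h => hnt (Or.inr (Or.inr ⟨u.succ_pos, hu, h⟩))
  simp only [Nat.add_sub_cancel, add_assoc, Nat.reduceAdd, mul_neg_iff, imp_false] at hprod
  simp only [IsStrictExtremum, Fin.lt_def]
  omega

theorem IsEdge.label_pred (hedge : IsEdge e σp σm x τ) {t : ℕ} (ht : InternalTP e x t) :
    τ t = !τ (t - 1) := by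
  have := hedge.2.2.1 (t - 1) (by have := ht.1; have := ht.2.1; omega)
  rwa [Nat.sub_add_cancel ht.1] at this

theorem IsEdge.sameComponent_succ (hJp : IsIntervalPartitionF n Jp)
    (hJm : IsIntervalPartitionF n Jm) (hσp : ∀ I ∈ Jp, ∀ a ∈ I, σp a ∈ I)
    (hσm : ∀ I ∈ Jm, ∀ a ∈ I, σm a ∈ I) (hedge : IsEdge e σp σm x τ) {u : ℕ} (hu : u + 1 < e) :
    SameComponent (if τ u then Jp else Jm) (x u) (x (u + 1)) := by
  rw [(hedge.2.2.2.1 u hu).1]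
  cases τ u
  · exact hJm.sameComponent_apply hσm _
  · exact hJp.sameComponent_apply hσp _

theorem IsEdge.sameComponent_pred (hJp : IsIntervalPartitionF n Jp)
    (hJm : IsIntervalPartitionF n Jm) (hσp : ∀ I ∈ Jp, ∀ a ∈ I, σp a ∈ I)
    (hσm : ∀ I ∈ Jm, ∀ a ∈ I, σm a ∈ I) (hedge : IsEdge e σp σm x τ) {t : ℕ}
    (ht : InternalTP e x t) :
    SameComponent (if τ (t - 1) then Jp else Jm) (x (t - 1)) (x t) := by
  have := hedge.sameComponent_succ hJp hJm hσp hσm (u := t - 1) (by have := ht.2.1; omega)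
  rwa [Nat.sub_add_cancel ht.1] at this

theorem IsEdge.not_sameComponent_and_lt_iff_forward (hJp : IsIntervalPartitionF n Jp)
    (hJm : IsIntervalPartitionF n Jm) (hσp : ∀ I ∈ Jp, ∀ a ∈ I, σp a ∈ I)
    (hσm : ∀ I ∈ Jm, ∀ a ∈ I, σm a ∈ I) (hedge : IsEdge e σp σm x τ) {t tp : ℕ}
    (ht : InternalTP e x t) (htp : t < tp) (htp' : TurningPt e x tp)
    (hnt : ∀ u, t < u → u < tp → ¬ TurningPt e x u)
    (hnil : eps n (x t) - eps n (x (t + 1))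
      ∈ Kset n (piOf n Jp) (piOf n Jm) ∪ -Kset n (piOf n Jp) (piOf n Jm)) :
    ¬ SameComponent (if τ (t - 1) then Jp else Jm) (x (t - 1)) (x tp) ∧
      (x (t - 1) < x t ↔ x (t - 1) < x tp) := by
  have htpe := hedge.lt_of_turningPt htp'
  have hsplit := not_sameComponent_of_mem_Kset_union_neg hJp hJm
    (hedge.2.2.2.1 t ht.2.1).2.symm hnil (hedge.sameComponent_succ hJp hJm hσp hσm ht.2.1)
  have hp := (hedge.sameComponent_pred hJp hJm hσp hσm ht).symm
  rw [show τ (t - 1) = !τ t by simp [hedge.label_pred ht]] at hp ⊢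
  have := not_rel_and_lt_iff_of_zigzag (S := fun s => SameComponent (if s then Jp else Jm))
    (y := fun k => x (t + k)) (lab := fun k => τ (t + k)) (m := tp - t)
    (fun s => (hJp.ite hJm s).sameComponent_equivalence)
    (fun s => (hJp.ite hJm s).ordConnected_sameComponent) (by omega)
    (fun k hk => hedge.2.2.1 (t + k) (by omega))
    (fun k hk => hedge.sameComponent_succ hJp hJm hσp hσm (by omega))
    (fun k hk => hedge.isStrictExtremum (by omega) (hnt _ (by omega) (by omega)))
    hsplit hp ht.lt_lt_or_gt_gt
  simpa [show t + (tp - t) = tp by omega] using this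

theorem IsEdge.not_sameComponent_and_lt_iff_backward (hJp : IsIntervalPartitionF n Jp)
    (hJm : IsIntervalPartitionF n Jm) (hσp : ∀ I ∈ Jp, ∀ a ∈ I, σp a ∈ I)
    (hσm : ∀ I ∈ Jm, ∀ a ∈ I, σm a ∈ I) (hedge : IsEdge e σp σm x τ) {t tm : ℕ}
    (ht : InternalTP e x t) (htm : tm < t) (hnt : ∀ u, tm < u → u < t → ¬ TurningPt e x u)
    (hnil : eps n (x (t - 1)) - eps n (x t)
      ∈ Kset n (piOf n Jp) (piOf n Jm) ∪ -Kset n (piOf n Jp) (piOf n Jm)) :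
    ¬ SameComponent (if τ t then Jp else Jm) (x (t + 1)) (x tm) ∧
      (x (t + 1) < x t ↔ x (t + 1) < x tm) := by
  obtain ⟨ht₀, hte, -⟩ := id ht
  have hne : x (t - 1) ≠ x t := by
    simpa [Nat.sub_add_cancel ht₀] using (hedge.2.2.2.1 (t - 1) (by omega)).2.symm
  have hsplit := not_sameComponent_of_mem_Kset_union_neg hJp hJm hne hnil
    (hedge.sameComponent_pred hJp hJm hσp hσm ht)
  have hp := hedge.sameComponent_succ hJp hJm hσp hσm hte
  rw [hedge.label_pred ht] at hp ⊢
  have := not_rel_and_lt_iff_of_zigzag (S := fun s => SameComponent (if s then Jp else Jm))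
    (y := fun k => x (t - k)) (lab := fun k => τ (t - (k + 1))) (m := t - tm)
    (fun s => (hJp.ite hJm s).sameComponent_equivalence)
    (fun s => (hJp.ite hJm s).ordConnected_sameComponent) (by omega)
    (fun k hk => by
      have := hedge.2.2.1 (t - (k + 2)) (by omega)
      rw [show t - (k + 2) + 1 = t - (k + 1) by omega] at this
      simp [this])
    (fun k hk => by
      have := hedge.sameComponent_succ hJp hJm hσp hσm (u := t - (k + 1)) (by omega)
      rw [show t - (k + 1) + 1 = t - k by omega] at this
      exact this.symm)
    (fun k hk => by
      have := hedge.isStrictExtremum (u := t - (k + 2)) (by omega)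
        (by rw [show t - (k + 2) + 1 = t - (k + 1) by omega]; exact hnt _ (by omega) (by omega))
      rw [show t - (k + 2) + 1 = t - (k + 1) by omega,
        show t - (k + 2) + 2 = t - k by omega] at this
      exact this.symm)
    (fun h => hsplit h.symm) hp ht.lt_lt_or_gt_gt.symm
  simpa [show t - (t - tm) = tm by omega] using this

end

theorem statement_14_general (n : ℕ)
    (Jp Jm : Set (Set (Fin n)))
    (hJp : IsIntervalPartitionF n Jp) (hJm : IsIntervalPartitionF n Jm)
    (σp σm : Fin n → Fin n)
    (hσpstable : ∀ I ∈ Jp, ∀ a ∈ I, σp a ∈ I)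
    (hσmstable : ∀ I ∈ Jm, ∀ a ∈ I, σm a ∈ I)
    (e : ℕ) (x : ℕ → Fin n) (τ : ℕ → Bool)
    (hedge : IsEdge e σp σm x τ)
    (εf : ℕ → ℤ) (hsign : SignConv e x τ εf)
    (t : ℕ) (ht : InternalTP e x t)
    (tm : ℕ) (htm1 : tm < t)
    (htm3 : ∀ u, tm < u → u < t → ¬ TurningPt e x u)
    (tp : ℕ) (htp1 : t < tp) (htp2 : TurningPt e x tp)
    (htp3 : ∀ u, t < u → u < tp → ¬ TurningPt e x u)
    (hnilm : eps n (x (t - 1)) - eps n (x t)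
      ∈ Kset n (piOf n Jp) (piOf n Jm) ∪ -Kset n (piOf n Jp) (piOf n Jm))
    (hnilp : eps n (x t) - eps n (x (t + 1))
      ∈ Kset n (piOf n Jp) (piOf n Jm) ∪ -Kset n (piOf n Jp) (piOf n Jm)) :
    (εf (t - 1) : ℝ) • ((eps n (x (t - 1)) - eps n (x t)) +
        ∑ i ∈ Finset.Ico t tp, (eps n (x i) - eps n (x (i + 1))))
      ∈ Kset n (piOf n Jp) (piOf n Jm) ∧
    (εf t : ℝ) • ((eps n (x t) - eps n (x (t + 1))) +
        ∑ i ∈ Finset.Ico tm t, (eps n (x i) - eps n (x (i + 1))))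
      ∈ Kset n (piOf n Jp) (piOf n Jm) := by
  obtain ⟨hsepm, hsidem⟩ := hedge.not_sameComponent_and_lt_iff_forward hJp hJm hσpstable
    hσmstable ht htp1 htp2 htp3 hnilp
  obtain ⟨hsepp, hsidep⟩ := hedge.not_sameComponent_and_lt_iff_backward hJp hJm hσpstable
    hσmstable ht htm1 htm3 hnilm
  obtain ⟨hcm, hposm, hnegm⟩ := hsign (t - 1) (by have := ht.2.1; omega)
  obtain ⟨hcp, hposp, hnegp⟩ := hsign t ht.2.1
  rw [Nat.sub_add_cancel ht.1] at hposm hnegm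
  rw [sum_Ico_sub_succ _ htp1.le, sum_Ico_sub_succ _ htm1.le, sub_add_sub_cancel,
    sub_add_sub_cancel']
  exact ⟨smul_eps_sub_eps_mem_Kset hJp hJm hcm hsidem hposm hnegm hsepm,
    smul_eps_sub_eps_mem_Kset' hJp hJm hcp hsidep hposp hnegp hsepp⟩

/-- Lemma 5.4: if both boundary values `β₋ = β_{t−1}` and `β₊ = β_t` at an internal turning
point `x t` are nil, then `ε₋(β₋ + ι₊) ∈ K` and `ε₊(β₊ + ι₋) ∈ K`, where `ι₋`, `ι₊` are the
simple interval values on either side of `x t`. -/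
theorem statement_14 (n : ℕ) (hn : 2 ≤ n)
    (Jp Jm : Set (Set (Fin n)))
    (hJp : IsIntervalPartitionF n Jp) (hJm : IsIntervalPartitionF n Jm)
    (hU : piOf n Jp ∪ piOf n Jm = simpleRoots n)
    (σp σm : Fin n → Fin n)
    (hσp : ∀ t, σp (σp t) = t) (hσm : ∀ t, σm (σm t) = t)
    (hσpstable : ∀ I ∈ Jp, ∀ a ∈ I, σp a ∈ I)
    (hσmstable : ∀ I ∈ Jm, ∀ a ∈ I, σm a ∈ I)
    (e : ℕ) (x : ℕ → Fin n) (τ : ℕ → Bool)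
    (hedge : IsEdge e σp σm x τ)
    (εf : ℕ → ℤ) (hsign : SignConv e x τ εf)
    (hR : ∀ i, i + 1 < e →
      (εf i : ℝ) • (eps n (x i) - eps n (x (i + 1))) ∈ Rset n (piOf n Jp) (piOf n Jm))
    (t : ℕ) (ht : InternalTP e x t)
    (tm : ℕ) (htm1 : tm < t) (htm2 : TurningPt e x tm)
    (htm3 : ∀ u, tm < u → u < t → ¬ TurningPt e x u)
    (tp : ℕ) (htp1 : t < tp) (htp2 : TurningPt e x tp)
    (htp3 : ∀ u, t < u → u < tp → ¬ TurningPt e x u)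
    (hnilm : eps n (x (t - 1)) - eps n (x t)
      ∈ Kset n (piOf n Jp) (piOf n Jm) ∪ -Kset n (piOf n Jp) (piOf n Jm))
    (hnilp : eps n (x t) - eps n (x (t + 1))
      ∈ Kset n (piOf n Jp) (piOf n Jm) ∪ -Kset n (piOf n Jp) (piOf n Jm)) :
    (εf (t - 1) : ℝ) • ((eps n (x (t - 1)) - eps n (x t)) +
        ∑ i ∈ Finset.Ico t tp, (eps n (x i) - eps n (x (i + 1))))
      ∈ Kset n (piOf n Jp) (piOf n Jm) ∧
    (εf t : ℝ) • ((eps n (x t) - eps n (x (t + 1))) +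
        ∑ i ∈ Finset.Ico tm t, (eps n (x i) - eps n (x (i + 1))))
      ∈ Kset n (piOf n Jp) (piOf n Jm) :=
  statement_14_general n Jp Jm hJp hJm σp σm hσpstable hσmstable e x τ hedge εf hsign t ht tm htm1
    htm3 tp htp1 htp2 htp3 hnilm hnilp
end

section
/- Let n ≥ 2 and let π⁺, π⁻ be subsets of the simple roots π of sl_n with π⁺ ∪ π⁻ = π. Let a, b, a', b' ∈ [1,n] be such that ε_a − ε_b ∈ (−R_*) ∩ Δ⁺ and ε_{a'} − ε_{b'} ∈ (−R_*) ∩ Δ⁻. Then it cannot happen that both ε_a − ε_{b'} ∈ M and ε_{a'} − ε_b ∈ M. (The key case of Lemma 9.3, in which each straightened edge equals its original edge and so has value in −R_*.) -/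
open Pointwise

/-! For `i < j`, the root `ε_i − ε_j` lies in `ℕS` (with `S ⊆ π`) iff `α_t ∈ S` for every
`i ≤ t < j`: the partial sums `v ↦ ∑_{x < m} v_x` are nonnegative on `ℕS` and vanish on it
when `α_{m-1} ∉ S`. So membership in `R` and `M` of the roots involved becomes a statement
about which indices of `[a, b)`, `[b', a')` and of the intervals between `a, b'` and between
`a', b` lie in `π⁺` and `π⁻`. If `a ≤ b'`, an index of `[a, b)` outside `π⁻` is pushed
successively past `b'` and `a'` into the interval between `a'` and `b`, which lies in
`π⁺ ∩ π⁻`; if `b' ≤ a`, the same happens to an index of `[b', a')` outside `π⁺`. -/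

section Roots

variable {n : ℕ}

lemma eps_sub_eps_inj {i j a b : Fin n} (hij : i ≠ j)
    (h : eps n i - eps n j = eps n a - eps n b) : i = a ∧ j = b := by
  have hi := congrFun h i
  have hj := congrFun h j
  simp only [eps, Pi.sub_apply, Pi.single_apply] at hi hj
  grind

lemma lt_of_eps_sub_eps_mem_DeltaPos {a b : Fin n} (h : eps n a - eps n b ∈ DeltaPos n) :
    a < b := by
  obtain ⟨i, j, hij, h⟩ := h
  obtain ⟨rfl, rfl⟩ := eps_sub_eps_inj hij.ne h.symm
  exact hij

lemma lt_of_eps_sub_eps_mem_DeltaNeg {a b : Fin n} (h : eps n a - eps n b ∈ DeltaNeg n) :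
    b < a :=
  lt_of_eps_sub_eps_mem_DeltaPos (by rwa [DeltaNeg, Set.mem_neg, neg_sub] at h)

/-- On `ℕπ` this is the coefficient of `α_{m-1}`. -/
def sumBelow (n m : ℕ) : (Fin n → ℝ) →+ ℝ where
  toFun v := ∑ x ∈ Finset.univ.filter (fun x : Fin n => (x : ℕ) < m), v x
  map_zero' := by simp
  map_add' v w := by simp [Finset.sum_add_distrib]

lemma sumBelow_eps_sub_eps (m : ℕ) (i j : Fin n) :
    sumBelow n m (eps n i - eps n j) =
      (if (i : ℕ) < m then 1 else 0) - (if (j : ℕ) < m then 1 else 0) := by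
  simp [sumBelow, eps, Pi.single_apply, Finset.sum_sub_distrib]

def simpleIndices (n : ℕ) (S : Set (Fin n → ℝ)) : Set ℕ :=
  {t | ∃ i j : Fin n, (i : ℕ) = t ∧ (j : ℕ) = t + 1 ∧ eps n i - eps n j ∈ S}

section Nspan

variable {S : Set (Fin n → ℝ)}

lemma sumBelow_nonneg_of_mem_Nspan (hS : S ⊆ simpleRoots n) (m : ℕ) {v : Fin n → ℝ}
    (hv : v ∈ Nspan S) : 0 ≤ sumBelow n m v := by
  induction hv using AddSubmonoid.closure_induction with
  | mem v hv =>
    obtain ⟨i, j, hj, rfl⟩ := hS hv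
    rw [sumBelow_eps_sub_eps]
    split_ifs <;> first | omega | norm_num
  | zero => simp
  | add v w _ _ hv hw => rw [map_add]; positivity

lemma sumBelow_eq_zero_of_mem_Nspan (hS : S ⊆ simpleRoots n) {t : ℕ}
    (ht : t ∉ simpleIndices n S) {v : Fin n → ℝ} (hv : v ∈ Nspan S) :
    sumBelow n (t + 1) v = 0 := by
  induction hv using AddSubmonoid.closure_induction with
  | mem v hv =>
    obtain ⟨i, j, hj, rfl⟩ := hS hv
    have hit : (i : ℕ) ≠ t := fun hit => ht ⟨i, j, hit, hit ▸ hj, hv⟩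
    rw [sumBelow_eps_sub_eps]
    split_ifs <;> first | omega | norm_num
  | zero => simp
  | add v w _ _ hv hw => rw [map_add, hv, hw, add_zero]

lemma eps_sub_eps_mem_Nspan_iff (hS : S ⊆ simpleRoots n) {i j : Fin n} (hij : i ≤ j) :
    eps n i - eps n j ∈ Nspan S ↔ Set.Ico (i : ℕ) j ⊆ simpleIndices n S := by
  constructor
  · intro hv t ht
    by_contra hts
    have := sumBelow_eq_zero_of_mem_Nspan hS hts hv
    rw [sumBelow_eps_sub_eps] at this
    obtain ⟨hit, htj⟩ := ht
    simp [Nat.lt_succ_of_le hit, show ¬ (j : ℕ) < t + 1 by omega] at this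
  · intro h
    induction hk : (j : ℕ) - i generalizing i with
    | zero =>
      rw [show i = j from le_antisymm hij (Fin.le_def.2 (by omega)), sub_self]
      exact zero_mem _
    | succ k ih =>
      obtain ⟨i₀, i', hi₀, hi', hmem⟩ := h ⟨le_rfl, by omega⟩
      rw [show i₀ = i from Fin.ext hi₀] at hmem
      have hi'j : i' ≤ j := Fin.le_def.2 (by omega)
      rw [← sub_add_sub_cancel _ (eps n i') _]
      exact add_mem (AddSubmonoid.subset_closure hmem)
        (ih hi'j (fun t ⟨ht₁, ht₂⟩ => h ⟨by omega, ht₂⟩) (by omega))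

lemma eps_sub_eps_notMem_Nspan (hS : S ⊆ simpleRoots n) {i j : Fin n} (hij : i < j) :
    eps n j - eps n i ∉ Nspan S := fun hv => by
  have := sumBelow_nonneg_of_mem_Nspan hS (i + 1) hv
  rw [sumBelow_eps_sub_eps] at this
  norm_num [show ¬ (j : ℕ) < i + 1 by omega] at this

end Nspan

section Rset

variable {Pp Pm : Set (Fin n → ℝ)}

lemma neg_Rset : -Rset n Pp Pm = Rset n Pm Pp := by
  rw [Rset, Rset, Set.inter_neg, Set.union_neg, neg_neg, neg_Delta, Set.union_comm]

lemma Mset_eq_inter : Mset n Pp Pm = Rset n Pp Pm ∩ Rset n Pm Pp := by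
  rw [Mset, neg_Rset]

lemma neg_Mset : -Mset n Pp Pm = Mset n Pp Pm := by
  rw [Mset_eq_inter, Set.inter_neg, neg_Rset, neg_Rset, Set.inter_comm]

lemma neg_RstarSet : -RstarSet n Pp Pm = Rset n Pp Pm \ Mset n Pp Pm := by
  ext v
  rw [RstarSet, Set.mem_neg, Set.mem_sdiff, Set.mem_neg, neg_neg, ← Set.mem_neg, neg_Mset,
    Set.mem_sdiff]

lemma eps_sub_eps_mem_Rset_iff (hPp : Pp ⊆ simpleRoots n) (hPm : Pm ⊆ simpleRoots n)
    {i j : Fin n} (hij : i < j) :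
    eps n i - eps n j ∈ Rset n Pp Pm ↔ Set.Ico (i : ℕ) j ⊆ simpleIndices n Pp := by
  have hDelta : eps n i - eps n j ∈ Delta n := ⟨i, j, hij.ne, rfl⟩
  have hPm' : eps n i - eps n j ∉ -Nspan Pm := by
    rw [Set.mem_neg, neg_sub]; exact eps_sub_eps_notMem_Nspan hPm hij
  simp only [Rset, Set.mem_inter_iff, Set.mem_union, hDelta, hPm', or_false, and_true]
  exact eps_sub_eps_mem_Nspan_iff hPp hij.le

lemma eps_sub_eps_mem_Rset_iff_of_gt (hPp : Pp ⊆ simpleRoots n) (hPm : Pm ⊆ simpleRoots n)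
    {i j : Fin n} (hij : i < j) :
    eps n j - eps n i ∈ Rset n Pp Pm ↔ Set.Ico (i : ℕ) j ⊆ simpleIndices n Pm := by
  rw [← neg_sub, ← Set.mem_neg, neg_Rset, eps_sub_eps_mem_Rset_iff hPm hPp hij]

lemma eps_sub_eps_mem_Mset_iff (hPp : Pp ⊆ simpleRoots n) (hPm : Pm ⊆ simpleRoots n)
    {i j : Fin n} (hij : i < j) :
    eps n i - eps n j ∈ Mset n Pp Pm ↔
      Set.Ico (i : ℕ) j ⊆ simpleIndices n Pp ∩ simpleIndices n Pm := by
  rw [Mset_eq_inter, Set.mem_inter_iff, eps_sub_eps_mem_Rset_iff hPp hPm hij,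
    eps_sub_eps_mem_Rset_iff hPm hPp hij, Set.subset_inter_iff]

lemma eps_sub_eps_mem_Mset_iff_of_gt (hPp : Pp ⊆ simpleRoots n) (hPm : Pm ⊆ simpleRoots n)
    {i j : Fin n} (hij : i < j) :
    eps n j - eps n i ∈ Mset n Pp Pm ↔
      Set.Ico (i : ℕ) j ⊆ simpleIndices n Pp ∩ simpleIndices n Pm := by
  rw [Mset_eq_inter, Set.mem_inter_iff, eps_sub_eps_mem_Rset_iff_of_gt hPp hPm hij,
    eps_sub_eps_mem_Rset_iff_of_gt hPm hPp hij, Set.subset_inter_iff, and_comm]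

lemma Ico_min_max_subset_of_eps_sub_eps_mem_Mset (hPp : Pp ⊆ simpleRoots n)
    (hPm : Pm ⊆ simpleRoots n) {i j : Fin n} (h : eps n i - eps n j ∈ Mset n Pp Pm) :
    Set.Ico (min i j : ℕ) (max i j) ⊆ simpleIndices n Pp ∩ simpleIndices n Pm := by
  rcases lt_trichotomy i j with hij | rfl | hij
  · simpa [hij.le] using (eps_sub_eps_mem_Mset_iff hPp hPm hij).1 h
  · simp
  · simpa [hij.le] using (eps_sub_eps_mem_Mset_iff_of_gt hPp hPm hij).1 h

end Rset

end Roots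

lemma false_of_crossing_Ico_subset {P Q : Set ℕ} {a b a' b' : ℕ}
    (hP : Set.Ico a b ⊆ P) (hPQ : ¬ Set.Ico a b ⊆ P ∩ Q)
    (hQ : Set.Ico b' a' ⊆ Q) (hQP : ¬ Set.Ico b' a' ⊆ P ∩ Q)
    (h₁ : Set.Ico (min a b') (max a b') ⊆ P ∩ Q) (h₂ : Set.Ico (min a' b) (max a' b) ⊆ P ∩ Q) :
    False := by
  obtain ⟨k, ⟨hak, hkb⟩, hk⟩ := Set.not_subset.1 hPQ
  obtain ⟨l, ⟨hbl, hla⟩, hl⟩ := Set.not_subset.1 hQP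
  rcases le_total a b' with hab' | hba'
  · have hbk : b' ≤ k := by
      by_contra!; exact hk (h₁ ⟨by omega, by omega⟩)
    have ha'k : a' ≤ k := by
      by_contra!; exact hk ⟨hP ⟨hak, hkb⟩, hQ ⟨hbk, this⟩⟩
    exact hk (h₂ ⟨by omega, by omega⟩)
  · have hal : a ≤ l := by
      by_contra!; exact hl (h₁ ⟨by omega, by omega⟩)
    have hbl : b ≤ l := by
      by_contra!; exact hl ⟨hP ⟨hal, this⟩, hQ ⟨hbl, hla⟩⟩
    exact hl (h₂ ⟨by omega, by omega⟩)

theorem statement_16_general (n : ℕ) (Pp Pm : Set (Fin n → ℝ))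
    (hPp : Pp ⊆ simpleRoots n) (hPm : Pm ⊆ simpleRoots n)
    (a b a' b' : Fin n)
    (h1 : eps n a - eps n b ∈ (-RstarSet n Pp Pm) ∩ DeltaPos n)
    (h2 : eps n a' - eps n b' ∈ (-RstarSet n Pp Pm) ∩ DeltaNeg n) :
    ¬ (eps n a - eps n b' ∈ Mset n Pp Pm ∧ eps n a' - eps n b ∈ Mset n Pp Pm) := by
  rintro ⟨hM₁, hM₂⟩
  obtain ⟨hR₁, hpos⟩ := h1
  obtain ⟨hR₂, hneg⟩ := h2
  rw [neg_RstarSet] at hR₁ hR₂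
  have hab := lt_of_eps_sub_eps_mem_DeltaPos hpos
  have hba := lt_of_eps_sub_eps_mem_DeltaNeg hneg
  exact false_of_crossing_Ico_subset
    ((eps_sub_eps_mem_Rset_iff hPp hPm hab).1 hR₁.1)
    (mt (eps_sub_eps_mem_Mset_iff hPp hPm hab).2 hR₁.2)
    ((eps_sub_eps_mem_Rset_iff_of_gt hPp hPm hba).1 hR₂.1)
    (mt (eps_sub_eps_mem_Mset_iff_of_gt hPp hPm hba).2 hR₂.2)
    (Ico_min_max_subset_of_eps_sub_eps_mem_Mset hPp hPm hM₁)
    (Ico_min_max_subset_of_eps_sub_eps_mem_Mset hPp hPm hM₂)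

/-- The key case of Lemma 9.3: if `ε_a − ε_b ∈ (−R_*) ∩ Δ⁺` and `ε_{a'} − ε_{b'} ∈ (−R_*) ∩ Δ⁻`,
then it cannot happen that both `ε_a − ε_{b'} ∈ M` and `ε_{a'} − ε_b ∈ M`. -/
theorem statement_16 (n : ℕ) (hn : 2 ≤ n) (Pp Pm : Set (Fin n → ℝ))
    (hPp : Pp ⊆ simpleRoots n) (hPm : Pm ⊆ simpleRoots n)
    (hU : Pp ∪ Pm = simpleRoots n)
    (a b a' b' : Fin n)
    (h1 : eps n a - eps n b ∈ (-RstarSet n Pp Pm) ∩ DeltaPos n)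
    (h2 : eps n a' - eps n b' ∈ (-RstarSet n Pp Pm) ∩ DeltaNeg n) :
    ¬ (eps n a - eps n b' ∈ Mset n Pp Pm ∧ eps n a' - eps n b ∈ Mset n Pp Pm) :=
  statement_16_general n Pp Pm hPp hPm a b a' b' h1 h2
end

section
/- Let 𝒥⁺, 𝒥⁻ be partitions of [1,n] into intervals, let s ≥ 2, and let f_1 < f_2 < … < f_s be points of [1,n] such that (a) no two of the f_i lie in the same double component (for i ≠ j, f_i and f_j do not lie both in a common component of 𝒥⁺ and in a common component of 𝒥⁻), and (b) no three of the f_i lie in a common component of 𝒥⁺, and no three of the f_i lie in a common component of 𝒥⁻. Then there exists a permutation p of {1,…,s} such that ε_{f_{p(i)}} − ε_{f_{p(i+1)}} ∈ K for all 1 ≤ i ≤ s−1. (Lemma 9.8, with the properties of fully fixed points made explicit as hypotheses (a) and (b).) -/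
open Pointwise

/-- Two points lie in a common component of `J`. -/
def sameComp {n : ℕ} (J : Set (Set (Fin n))) (a b : Fin n) : Prop :=
  ∃ I ∈ J, a ∈ I ∧ b ∈ I

lemma sameComp_symm {n : ℕ} {J : Set (Set (Fin n))} {a b : Fin n}
    (h : sameComp J a b) : sameComp J b a := by
  obtain ⟨I, hI, ha, hb⟩ := h; exact ⟨I, hI, hb, ha⟩

/-- The functional `v ↦ ∑_{t ≤ k} v t`. -/
def phiF (n : ℕ) (k : Fin n) : (Fin n → ℝ) →+ ℝ where
  toFun v := ∑ t ∈ Finset.Iic k, v t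
  map_zero' := by simp
  map_add' v w := by simp [Finset.sum_add_distrib]

lemma phiF_eps (n : ℕ) (k a : Fin n) :
    phiF n k (eps n a) = if a ≤ k then 1 else 0 := by
  classical
  simp [phiF, eps, Pi.single_apply, Finset.sum_ite_eq', Finset.mem_Iic]

lemma not_mem_nspan {n : ℕ} {S : Set (Fin n → ℝ)} (ψ : (Fin n → ℝ) →+ ℝ)
    (hS : ∀ v ∈ S, ψ v ≤ 0) {w : Fin n → ℝ} (hw : 0 < ψ w) : w ∉ Nspan S := by
  intro hmem
  let N : AddSubmonoid (Fin n → ℝ) :=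
    { carrier := {v | ψ v ≤ 0}
      zero_mem' := by simp
      add_mem' := fun {a b} ha hb => by
        simp only [Set.mem_setOf_eq, map_add] at *
        linarith }
  have h2 : w ∈ N := AddSubmonoid.closure_le.mpr (fun v hv => hS v hv) hmem
  have h3 : ψ w ≤ 0 := h2
  linarith

lemma eps_sub_not_mem_nspan {n : ℕ} {J : Set (Set (Fin n))} (hJ : IsIntervalPartitionF n J)
    {a b : Fin n} (hab : a ≠ b) (h : a < b → ¬ sameComp J a b) :
    eps n a - eps n b ∉ Nspan (piOf n J) := by
  rcases lt_or_gt_of_ne hab with hlt | hgt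
  · -- `a < b`, not in a common component : there is a "boundary" `d` with `a ≤ d < b`.
    obtain ⟨I, hI, haI⟩ : ∃ I ∈ J, a ∈ I := Set.mem_sUnion.mp (hJ.2.1.symm ▸ Set.mem_univ a)
    obtain ⟨c, d, hcd, rfl⟩ := hJ.1 I hI
    have hdb : d < b := by
      by_contra hb
      exact h hlt ⟨Set.Icc c d, hI, haI, ⟨le_trans haI.1 hlt.le, not_lt.mp hb⟩⟩
    refine not_mem_nspan (phiF n d) ?_ ?_
    · rintro v ⟨i, j, hji, rfl, I', hI', hiI', hjI'⟩
      rw [map_sub, phiF_eps, phiF_eps]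
      by_cases hik : i ≤ d
      · by_cases hjk : j ≤ d
        · simp [hik, hjk]
        · exfalso
          have hid : i = d := by
            apply Fin.ext
            have h1 := Fin.le_def.mp hik
            have h2 := Fin.lt_def.mp (not_le.mp hjk)
            omega
          have hdI' : d ∈ I' := hid ▸ hiI'
          have hII : I' = Set.Icc c d := by
            by_contra hne
            exact Set.disjoint_left.mp (hJ.2.2 I' hI' _ hI hne) hdI' ⟨hcd, le_refl d⟩
          have : j ∈ Set.Icc c d := hII ▸ hjI'
          exact hjk this.2
      · have hjk : ¬ j ≤ d := by
          rw [Fin.le_def] at hik ⊢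
          omega
        simp [hik, hjk]
    · rw [map_sub, phiF_eps, phiF_eps, if_pos haI.2, if_neg (not_le.mpr hdb)]
      norm_num
  · -- `b < a` : use `-(phiF n b)`.
    refine not_mem_nspan (-(phiF n b)) ?_ ?_
    · rintro v ⟨i, j, hji, rfl, -⟩
      simp only [AddMonoidHom.neg_apply, map_sub, phiF_eps]
      by_cases hik : i ≤ b
      · by_cases hjk : j ≤ b
        · simp [hik, hjk]
        · simp only [if_pos hik, if_neg hjk]
          norm_num
      · have hjk : ¬ j ≤ b := by
          rw [Fin.le_def] at hik ⊢
          omega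
        simp [hik, hjk]
    · simp only [AddMonoidHom.neg_apply, map_sub, phiF_eps,
        if_neg (not_le.mpr hgt), if_pos (le_refl b)]
      norm_num

lemma eps_sub_mem_K {n : ℕ} {Jp Jm : Set (Set (Fin n))}
    (hJp : IsIntervalPartitionF n Jp) (hJm : IsIntervalPartitionF n Jm)
    {a b : Fin n} (hab : a ≠ b)
    (hp : a < b → ¬ sameComp Jp a b) (hm : b < a → ¬ sameComp Jm a b) :
    eps n a - eps n b ∈ Kset n (piOf n Jp) (piOf n Jm) := by
  constructor
  · exact ⟨a, b, hab, rfl⟩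
  · rintro ⟨h1 | h1, -⟩
    · exact eps_sub_not_mem_nspan hJp hab hp h1
    · rw [Set.mem_neg, neg_sub] at h1
      exact eps_sub_not_mem_nspan hJm hab.symm
        (fun hba hsc => hm hba (sameComp_symm hsc)) h1

/-- The "separating" permutation of `Fin s` : odds first, then evens. -/
def gfun (s : ℕ) (i : Fin s) : Fin s :=
  ⟨if (i : ℕ) < s / 2 then 2 * (i : ℕ) + 1 else 2 * ((i : ℕ) - s / 2), by
    have := i.isLt
    split_ifs <;> omega⟩

/-- Lemma 9.8: given `f_1 < … < f_s` in `[1,n]` such that no two lie in a common double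
component and no three lie in a common component of `𝒥⁺` or of `𝒥⁻`, there is a permutation
`p` of `{1,…,s}` with `ε_{f_{p(i)}} − ε_{f_{p(i+1)}} ∈ K` for all `i`. -/
theorem statement_17 (n : ℕ) (hn : 2 ≤ n)
    (Jp Jm : Set (Set (Fin n)))
    (hJp : IsIntervalPartitionF n Jp) (hJm : IsIntervalPartitionF n Jm)
    (s : ℕ) (hs : 2 ≤ s) (f : Fin s → Fin n) (hmono : StrictMono f)
    (hpair : ∀ i j : Fin s, i ≠ j →
      ¬ ∃ Ip ∈ Jp, ∃ Im ∈ Jm, f i ∈ Ip ∧ f i ∈ Im ∧ f j ∈ Ip ∧ f j ∈ Im)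
    (htriplep : ∀ i j l : Fin s, i ≠ j → j ≠ l → i ≠ l →
      ¬ ∃ I ∈ Jp, f i ∈ I ∧ f j ∈ I ∧ f l ∈ I)
    (htriplem : ∀ i j l : Fin s, i ≠ j → j ≠ l → i ≠ l →
      ¬ ∃ I ∈ Jm, f i ∈ I ∧ f j ∈ I ∧ f l ∈ I) :
    ∃ p : Equiv.Perm (Fin s), ∀ i j : Fin s, (j : ℕ) = (i : ℕ) + 1 →
      eps n (f (p i)) - eps n (f (p j)) ∈ Kset n (piOf n Jp) (piOf n Jm) := by
  classical
  -- indices at distance ≥ 2 never share a component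
  have key : ∀ (J : Set (Set (Fin n))), IsIntervalPartitionF n J →
      (∀ i j l : Fin s, i ≠ j → j ≠ l → i ≠ l → ¬ ∃ I ∈ J, f i ∈ I ∧ f j ∈ I ∧ f l ∈ I) →
      ∀ u v : Fin s, (u : ℕ) + 2 ≤ (v : ℕ) → ¬ sameComp J (f u) (f v) := by
    rintro J hJ htr u v huv ⟨I, hI, hu, hv⟩
    obtain ⟨c, d, hcd, rfl⟩ := hJ.1 I hI
    have hvs : (u : ℕ) + 1 < s := by have := v.isLt; omega
    set m : Fin s := ⟨(u : ℕ) + 1, hvs⟩ with hmdef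
    have h1 : f u < f m := hmono (by rw [Fin.lt_def]; simp [hmdef])
    have h2 : f m < f v := hmono (by rw [Fin.lt_def]; simp [hmdef]; omega)
    exact htr u m v (Fin.ne_of_val_ne (by simp [hmdef]))
      (Fin.ne_of_val_ne (by simp [hmdef]; omega))
      (Fin.ne_of_val_ne (by omega))
      ⟨Set.Icc c d, hI, hu, ⟨le_trans hu.1 h1.le, le_trans h2.le hv.2⟩, hv⟩
  have hfar : ∀ u v : Fin s, ((u : ℕ) + 2 ≤ (v : ℕ) ∨ (v : ℕ) + 2 ≤ (u : ℕ)) →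
      eps n (f u) - eps n (f v) ∈ Kset n (piOf n Jp) (piOf n Jm) := by
    intro u v h
    have huv : u ≠ v := Fin.ne_of_val_ne (by omega)
    have hne : f u ≠ f v := fun e => huv (hmono.injective e)
    refine eps_sub_mem_K hJp hJm hne (fun _ => ?_) (fun _ => ?_)
    · rcases h with h | h
      · exact key Jp hJp htriplep u v h
      · exact fun hsc => key Jp hJp htriplep v u h (sameComp_symm hsc)
    · rcases h with h | h
      · exact key Jm hJm htriplem u v h
      · exact fun hsc => key Jm hJm htriplem v u h (sameComp_symm hsc)
  -- for adjacent indices, sharing a `Jp` component forbids sharing a `Jm` component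
  have hadj : ∀ u v : Fin s, u ≠ v → sameComp Jp (f u) (f v) →
      ¬ sameComp Jm (f v) (f u) := by
    rintro u v huv ⟨Ip, hIp, hup, hvp⟩ ⟨Im, hIm, hvm, hum⟩
    exact hpair u v huv ⟨Ip, hIp, Im, hIm, hup, hum, hvp, hvm⟩
  obtain rfl | rfl | hs4 : s = 2 ∨ s = 3 ∨ 4 ≤ s := by omega
  · -- s = 2
    have h01 : f 0 < f 1 := hmono (by decide)
    by_cases hc : sameComp Jp (f 0) (f 1)
    · refine ⟨Equiv.swap 0 1, ?_⟩
      intro i j hij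
      have hi : i = 0 := Fin.ext (by simp; omega)
      have hj : j = 1 := Fin.ext (by simp; omega)
      subst hi; subst hj
      rw [Equiv.swap_apply_left, Equiv.swap_apply_right]
      exact eps_sub_mem_K hJp hJm h01.ne'
        (fun h' => absurd h' (lt_asymm h01))
        (fun _ => hadj 0 1 (by decide) hc)
    · refine ⟨Equiv.refl _, ?_⟩
      intro i j hij
      have hi : i = 0 := Fin.ext (by simp; omega)
      have hj : j = 1 := Fin.ext (by simp; omega)
      subst hi; subst hj
      simp only [Equiv.refl_apply]
      exact eps_sub_mem_K hJp hJm h01.ne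
        (fun _ => hc) (fun h' => absurd h' (lt_asymm h01))
  · -- s = 3
    have h12 : f 1 < f 2 := hmono (by decide)
    by_cases hc : sameComp Jp (f 1) (f 2)
    · refine ⟨Equiv.swap 1 2, ?_⟩
      intro i j hij
      have hij' : ((i : ℕ) = 0 ∧ (j : ℕ) = 1) ∨ ((i : ℕ) = 1 ∧ (j : ℕ) = 2) := by omega
      rcases hij' with ⟨hi, hj⟩ | ⟨hi, hj⟩
      · have hi' : i = 0 := Fin.ext (by simp [hi])
        have hj' : j = 1 := Fin.ext (by simp [hj])
        subst hi'; subst hj'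
        have e0 : (Equiv.swap (1 : Fin 3) 2) 0 = 0 := by decide
        have e1 : (Equiv.swap (1 : Fin 3) 2) 1 = 2 := by decide
        rw [e0, e1]
        exact hfar 0 2 (Or.inl (by decide))
      · have hi' : i = 1 := Fin.ext (by simp [hi])
        have hj' : j = 2 := Fin.ext (by simp [hj])
        subst hi'; subst hj'
        have e1 : (Equiv.swap (1 : Fin 3) 2) 1 = 2 := by decide
        have e2 : (Equiv.swap (1 : Fin 3) 2) 2 = 1 := by decide
        rw [e1, e2]
        exact eps_sub_mem_K hJp hJm h12.ne'
          (fun h' => absurd h' (lt_asymm h12))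
          (fun _ => hadj 1 2 (by decide) hc)
    · refine ⟨finRotate 3, ?_⟩
      intro i j hij
      have hij' : ((i : ℕ) = 0 ∧ (j : ℕ) = 1) ∨ ((i : ℕ) = 1 ∧ (j : ℕ) = 2) := by omega
      rcases hij' with ⟨hi, hj⟩ | ⟨hi, hj⟩
      · have hi' : i = 0 := Fin.ext (by simp [hi])
        have hj' : j = 1 := Fin.ext (by simp [hj])
        subst hi'; subst hj'
        have e0 : (finRotate 3) 0 = 1 := by decide
        have e1 : (finRotate 3) 1 = 2 := by decide
        rw [e0, e1]
        exact eps_sub_mem_K hJp hJm h12.ne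
          (fun _ => hc) (fun h' => absurd h' (lt_asymm h12))
      · have hi' : i = 1 := Fin.ext (by simp [hi])
        have hj' : j = 2 := Fin.ext (by simp [hj])
        subst hi'; subst hj'
        have e1 : (finRotate 3) 1 = 2 := by decide
        have e2 : (finRotate 3) 2 = 0 := by decide
        rw [e1, e2]
        exact hfar 2 0 (Or.inr (by decide))
  · -- s ≥ 4 : odds first, then evens; all steps have distance ≥ 2
    have hginj : Function.Injective (gfun s) := by
      intro i j hij
      apply Fin.ext
      have h := congrArg Fin.val hij
      simp only [gfun] at h
      have hi := i.isLt; have hj := j.isLt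
      split_ifs at h <;> omega
    refine ⟨Equiv.ofBijective (gfun s) (Finite.injective_iff_bijective.mp hginj), ?_⟩
    intro i j hij
    have hprop : ((gfun s i : ℕ) + 2 ≤ (gfun s j : ℕ)) ∨
        ((gfun s j : ℕ) + 2 ≤ (gfun s i : ℕ)) := by
      simp only [gfun]
      have hi := i.isLt; have hj := j.isLt
      split_ifs <;> omega
    exact hfar (gfun s i) (gfun s j) hprop
end
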